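/- arXiv:1107.2954 — 12 statements merged into one kernel-verified Lean document; each statement's English description precedes it below -/
import Mathlib

section
/- If A is a finite nonempty subset of the nonnegative integers, then per(A) ≥ (-1 + √(1 + 8·vol(A)))/2, and hence per(A) ≥ √(2·vol(A)) − 1/2. -/
open scoped BigOperators

/-- Boundary of a set of naturals: elements whose predecessor (in ℤ) or successor
is not in the set. Note `z = 0` is always a boundary element of a set containing it,
since `-1` is never in a set of naturals. -/
def bdry (A : Set ℕ) : Set ℕ := {z | z ∈ A ∧ ¬(1 ≤ z ∧ z - 1 ∈ A ∧ z + 1 ∈ A)}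

/-- Volume: sum of the elements. -/
noncomputable def vol (A : Set ℕ) : ℕ := ∑ᶠ z ∈ A, z

/-- Perimeter: sum of the boundary elements. -/
noncomputable def per (A : Set ℕ) : ℕ := ∑ᶠ z ∈ bdry A, z

/-- Minimum perimeter over subsets of ℕ of volume `n`. -/
noncomputable def P (n : ℕ) : ℕ := sInf {p | ∃ A : Set ℕ, vol A = n ∧ per A = p}

/-- Minimum perimeter of the complement over subsets of ℕ of volume `n`. -/
noncomputable def Q (n : ℕ) : ℕ := sInf {p | ∃ A : Set ℕ, vol A = n ∧ per Aᶜ = p}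

noncomputable def f (n : ℕ) : ℕ := (⌈(-1 + Real.sqrt (1 + 8 * n)) / 2⌉).toNat

noncomputable def g (n : ℕ) : ℕ := f n * (f n + 1) / 2 - n
lemma tri_superadd (t : Finset ℕ) : ∑ w ∈ t, w * (w + 1) ≤ (∑ w ∈ t, w) * ((∑ w ∈ t, w) + 1) := by
  classical
  induction t using Finset.induction_on with
  | empty => simp
  | @insert a s ha ih =>
    rw [Finset.sum_insert ha, Finset.sum_insert ha]
    set S := ∑ w ∈ s, w
    nlinarith [ih]

lemma key (A : Set ℕ) (hA : A.Finite) : 2 * vol A ≤ per A * (per A + 1) := by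
  classical
  have hbd : (bdry A).Finite := hA.subset (fun z hz => hz.1)
  obtain ⟨N, hN⟩ := hA.bddAbove
  have hex : ∀ z : ℕ, ∃ k, z + k ∉ A := fun z =>
    ⟨N + 1, fun h => by have := hN h; omega⟩
  set re : ℕ → ℕ := fun z => z + Nat.find (hex z) - 1 with hre
  have hrez : ∀ z ∈ A, z ≤ re z ∧ re z ∈ bdry A := by
    intro z hz
    have hk1 : 1 ≤ Nat.find (hex z) := by
      rcases Nat.eq_zero_or_pos (Nat.find (hex z)) with h | h
      · exact absurd (by simpa [h] using Nat.find_spec (hex z)) (by simpa using hz)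
      · exact h
    have hmem : re z ∈ A := by
      have := Nat.find_min (hex z) (m := Nat.find (hex z) - 1) (by omega)
      simp only [not_not] at this
      have heq : z + (Nat.find (hex z) - 1) = re z := by simp [hre]; omega
      rwa [heq] at this
    have hnot : re z + 1 ∉ A := by
      have := Nat.find_spec (hex z)
      have heq : re z + 1 = z + Nat.find (hex z) := by simp [hre]; omega
      rwa [heq]
    refine ⟨by simp [hre]; omega, hmem, ?_⟩
    rintro ⟨-, -, h⟩; exact hnot h
  set S := hA.toFinset with hS
  set B := hbd.toFinset with hB
  have hvol : vol A = ∑ z ∈ S, z := by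
    rw [vol, ← finsum_mem_coe_finset]; congr 1; simp [hS]
  have hper : per A = ∑ z ∈ B, z := by
    rw [per, ← finsum_mem_coe_finset]; congr 1; simp [hB]
  have hmaps : ∀ z ∈ S, re z ∈ B := by
    intro z hz
    simp only [hS, Set.Finite.mem_toFinset] at hz
    simpa [hB] using (hrez z hz).2
  have hfib : ∑ w ∈ B, ∑ z ∈ S.filter (fun z => re z = w), z = ∑ z ∈ S, z :=
    Finset.sum_fiberwise_of_maps_to hmaps _
  have hfibw : ∀ w ∈ B, 2 * ∑ z ∈ S.filter (fun z => re z = w), z ≤ w * (w + 1) := by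
    intro w hw
    have hsub : S.filter (fun z => re z = w) ⊆ Finset.range (w + 1) := by
      intro z hz
      simp only [Finset.mem_filter, hS, Set.Finite.mem_toFinset] at hz
      have hle := (hrez z hz.1).1
      rw [hz.2] at hle
      simpa [Finset.mem_range] using Nat.lt_succ_of_le hle
    calc 2 * ∑ z ∈ S.filter (fun z => re z = w), z
        ≤ 2 * ∑ z ∈ Finset.range (w + 1), z :=
          Nat.mul_le_mul_left 2 (Finset.sum_le_sum_of_subset hsub)
      _ = w * (w + 1) := by
          have h := Finset.sum_range_id_mul_two (w + 1)
          simp only [Nat.add_sub_cancel] at h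
          rw [mul_comm 2, h, Nat.mul_comm]
  calc 2 * vol A = ∑ w ∈ B, 2 * ∑ z ∈ S.filter (fun z => re z = w), z := by
        rw [hvol, ← hfib, Finset.mul_sum]
    _ ≤ ∑ w ∈ B, w * (w + 1) := Finset.sum_le_sum hfibw
    _ ≤ (∑ w ∈ B, w) * ((∑ w ∈ B, w) + 1) := tri_superadd B
    _ = per A * (per A + 1) := by rw [hper]

theorem stmt_1 (A : Set ℕ) (hA : A.Finite) (hne : A.Nonempty) :
    ((-1 + Real.sqrt (1 + 8 * (vol A : ℝ))) / 2 ≤ (per A : ℝ)) ∧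
    (Real.sqrt (2 * (vol A : ℝ)) - 1 / 2 ≤ (per A : ℝ)) := by
  have h := key A hA
  set v : ℝ := (vol A : ℝ) with hv
  set p : ℝ := (per A : ℝ) with hp
  have hvr : 2 * v ≤ p * (p + 1) := by
    have := h
    push_cast [hv, hp]
    exact_mod_cast by exact_mod_cast h
  have hv0 : 0 ≤ v := by positivity
  have hp0 : 0 ≤ p := by positivity
  have h1 : Real.sqrt (1 + 8 * v) ≤ 2 * p + 1 := by
    rw [show 2 * p + 1 = Real.sqrt ((2 * p + 1) ^ 2) from (Real.sqrt_sq (by linarith)).symm]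
    apply Real.sqrt_le_sqrt; nlinarith
  have h2 : Real.sqrt (2 * v) ≤ p + 1 / 2 := by
    rw [show p + 1 / 2 = Real.sqrt ((p + 1 / 2) ^ 2) from (Real.sqrt_sq (by linarith)).symm]
    apply Real.sqrt_le_sqrt; nlinarith
  constructor <;> linarith
end

section
/- For every positive integer n, P(n) > √2 · n^{1/2} − 1/2, where P(n) is the minimum perimeter over all subsets A of the nonnegative integers with vol(A) = n. -/
open scoped BigOperators

lemma aux_finsum_eq (B : Set ℕ) (hB : (B ∩ Function.support (id : ℕ → ℕ)).Finite) :
    ∑ᶠ z ∈ B, z = ∑ z ∈ hB.toFinset, z := by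
  have h1 : ∑ᶠ z ∈ B ∩ Function.support (id : ℕ → ℕ), id z = ∑ᶠ z ∈ B, id z :=
    finsum_mem_inter_support _ B
  have h2 := finsum_mem_eq_finite_toFinset_sum (id : ℕ → ℕ) hB
  simpa using h1.symm.trans h2

theorem stmt_2 (n : ℕ) (hn : 1 ≤ n) :
    Real.sqrt 2 * Real.sqrt n - 1 / 2 < (P n : ℝ) := by
  -- the set of achievable perimeters is nonempty
  have hne : {p | ∃ A : Set ℕ, vol A = n ∧ per A = p}.Nonempty :=
    ⟨per {n}, {n}, by simp [vol, finsum_mem_singleton], rfl⟩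
  obtain ⟨A, hvol, hper⟩ := Nat.sInf_mem hne
  -- A has finite support
  have hfin : (A ∩ Function.support (id : ℕ → ℕ)).Finite := by
    by_contra h
    have := finsum_mem_eq_zero_of_infinite (f := (id : ℕ → ℕ)) h
    simp only [id_eq] at this
    rw [vol] at hvol
    omega
  set T := hfin.toFinset with hT
  have hvolT : ∑ z ∈ T, z = n := by rw [← hvol, vol, aux_finsum_eq A hfin]
  have hTne : T.Nonempty := by
    rcases T.eq_empty_or_nonempty with h | h
    · rw [h, Finset.sum_empty] at hvolT; omega
    · exact h
  set m := T.max' hTne with hm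
  have hmT : m ∈ T := T.max'_mem hTne
  have hmA : m ∈ A := by
    have := hfin.mem_toFinset.mp hmT
    exact this.1
  have hmpos : 1 ≤ m := by
    have := hfin.mem_toFinset.mp hmT
    have : m ∈ Function.support (id : ℕ → ℕ) := this.2
    simpa [Function.mem_support] using Nat.one_le_iff_ne_zero.mpr this
  -- m is a boundary element
  have hmb : m ∈ bdry A := by
    refine ⟨hmA, ?_⟩
    rintro ⟨-, -, hs⟩
    have : m + 1 ∈ T := hfin.mem_toFinset.mpr ⟨hs, by simp [Function.mem_support]⟩
    have := T.le_max' _ this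
    omega
  -- perimeter bound: m ≤ per A
  have hbfin : (bdry A ∩ Function.support (id : ℕ → ℕ)).Finite :=
    hfin.subset (Set.inter_subset_inter_left _ (fun z hz => hz.1))
  have hperge : m ≤ per A := by
    rw [per, aux_finsum_eq (bdry A) hbfin]
    exact Finset.single_le_sum (f := _root_.id) (fun i _ => Nat.zero_le i)
      (hbfin.mem_toFinset.mpr ⟨hmb, by
        simp only [Function.mem_support, id_eq]
        exact Nat.one_le_iff_ne_zero.mp hmpos⟩)
  -- volume bound: 2n ≤ m(m+1)
  have hsub : T ⊆ Finset.range (m + 1) := fun t ht =>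
    Finset.mem_range.mpr (Nat.lt_succ_of_le (T.le_max' t ht))
  have h2n : 2 * n ≤ m * (m + 1) := by
    have h1 : ∑ z ∈ T, z ≤ ∑ z ∈ Finset.range (m + 1), z :=
      Finset.sum_le_sum_of_subset hsub
    have h2 : (∑ z ∈ Finset.range (m + 1), z) * 2 = m * (m + 1) := by
      rw [Finset.sum_range_id_mul_two, Nat.add_sub_cancel, Nat.mul_comm]
    omega
  -- now real arithmetic
  have hmP : (m : ℝ) ≤ (P n : ℝ) := by
    exact_mod_cast le_trans hperge (le_of_eq hper)
  have hs : Real.sqrt 2 * Real.sqrt n = Real.sqrt (2 * n) :=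
    (Real.sqrt_mul (by norm_num) _).symm
  have hlt : Real.sqrt (2 * n) < (m : ℝ) + 1 / 2 := by
    rw [show ((2 : ℝ) * n) = ((2 * n : ℕ) : ℝ) by push_cast; ring]
    rw [Real.sqrt_lt' (by positivity)]
    have : ((2 * n : ℕ) : ℝ) ≤ (m : ℝ) * ((m : ℝ) + 1) := by exact_mod_cast h2n
    nlinarith
  rw [hs]
  linarith
end

section
/- If A ⊆ ℕ is a finite set with finite perimeter, then per(A^c) ≤ 2·per(A) + 1, where A^c = ℕ \ A. -/
open scoped BigOperators

lemma my_sum_image_le (s : Finset ℕ) (f : ℕ → ℕ) : ∑ y ∈ s.image f, y ≤ ∑ x ∈ s, f x := by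
  induction s using Finset.induction with
  | empty => simp
  | insert _ _ ha ih =>
    rename_i a s
    rw [Finset.image_insert, Finset.sum_insert ha]
    by_cases h : f a ∈ s.image f
    · rw [Finset.insert_eq_self.mpr h]
      exact ih.trans (Nat.le_add_left _ _)
    · rw [Finset.sum_insert h]
      exact Nat.add_le_add_left ih _

theorem stmt_3 (A : Set ℕ) (hA : A.Finite) :
    per Aᶜ ≤ 2 * per A + 1 := by
  have hB : (bdry A).Finite := hA.subset (fun z hz => hz.1)
  set B : Finset ℕ := hB.toFinset with hBdef
  have hperA : per A = ∑ b ∈ B, b := by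
    rw [per, ← hB.coe_toFinset, finsum_mem_coe_finset]
  set S : Finset ℕ := insert 0 (B.image (· + 1) ∪ B.image (· - 1)) with hSdef
  have hsub : bdry Aᶜ ⊆ ↑S := by
    intro z hz
    obtain ⟨hzA, hz2⟩ := hz
    simp only [Set.mem_compl_iff] at hzA
    rcases Nat.eq_zero_or_pos z with h0 | h1
    · subst h0
      simp [hSdef]
    · have : ¬(z - 1 ∈ Aᶜ ∧ z + 1 ∈ Aᶜ) := fun hc => hz2 ⟨h1, hc.1, hc.2⟩
      rw [not_and_or] at this
      simp only [Set.mem_compl_iff, not_not] at this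
      rcases this with hm | hp
      · have hmem : z - 1 ∈ bdry A := by
          refine ⟨hm, fun hc => ?_⟩
          have : z - 1 + 1 = z := Nat.succ_pred_eq_of_pos h1
          rw [this] at hc
          exact hzA hc.2.2
        have : z - 1 ∈ B := hB.mem_toFinset.mpr hmem
        simp only [hSdef, Finset.coe_insert, Set.mem_insert_iff, Finset.coe_union,
          Set.mem_union, Finset.coe_image, Set.mem_image]
        exact Or.inr (Or.inl ⟨z - 1, this, Nat.succ_pred_eq_of_pos h1⟩)
      · have hmem : z + 1 ∈ bdry A := by
          refine ⟨hp, fun hc => ?_⟩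
          have : z + 1 - 1 = z := rfl
          exact hzA (this ▸ hc.2.1)
        have : z + 1 ∈ B := hB.mem_toFinset.mpr hmem
        simp only [hSdef, Finset.coe_insert, Set.mem_insert_iff, Finset.coe_union,
          Set.mem_union, Finset.coe_image, Set.mem_image]
        exact Or.inr (Or.inr ⟨z + 1, this, rfl⟩)
  have hBc : (bdry Aᶜ).Finite := (S.finite_toSet).subset hsub
  have hperAc : per Aᶜ = ∑ b ∈ hBc.toFinset, b := by
    have h := finsum_mem_coe_finset (fun z : ℕ => z) hBc.toFinset
    rw [hBc.coe_toFinset] at h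
    rw [per]
    exact h
  rw [hperAc]
  have h1 : ∑ b ∈ hBc.toFinset, b ≤ ∑ b ∈ S, b := by
    apply Finset.sum_le_sum_of_subset
    intro x hx
    exact Finset.mem_coe.mp (hsub (hBc.mem_toFinset.mp hx))
  refine h1.trans ?_

  have h2 : ∑ b ∈ S, b = ∑ b ∈ B.image (· + 1) ∪ B.image (· - 1), b :=
    Finset.sum_insert_of_eq_zero_if_notMem (fun _ => rfl)
  rw [h2]
  have h3 : ∑ b ∈ B.image (· + 1) ∪ B.image (· - 1), b ≤
      ∑ b ∈ B.image (· + 1), b + ∑ b ∈ B.image (· - 1), b := by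
    have := Finset.sum_union_inter (s₁ := B.image (· + 1)) (s₂ := B.image (· - 1)) (f := id)
    simp only [id_eq] at this
    omega
  refine h3.trans ?_
  have h4 : ∑ b ∈ B.image (· + 1), b ≤ ∑ b ∈ B, (b + 1) := my_sum_image_le B _
  have h5 : ∑ b ∈ B.image (· - 1), b ≤ ∑ b ∈ B, (b - 1) := my_sum_image_le B _
  have h6 : ∑ b ∈ B, (b + 1) + ∑ b ∈ B, (b - 1) ≤ 2 * ∑ b ∈ B, b + 1 := by
    by_cases h0 : (0 : ℕ) ∈ B
    · have hins : B = insert 0 (B.erase 0) := (Finset.insert_erase h0).symm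
      have hz : (0 : ℕ) ∉ B.erase 0 := Finset.notMem_erase 0 B
      rw [hins, Finset.sum_insert hz, Finset.sum_insert hz, Finset.sum_insert hz]
      have e1 : ∑ b ∈ B.erase 0, (b + 1) + ∑ b ∈ B.erase 0, (b - 1)
          = ∑ b ∈ B.erase 0, 2 * b := by
        rw [← Finset.sum_add_distrib]
        apply Finset.sum_congr rfl
        intro x hx
        have : x ≠ 0 := Finset.ne_of_mem_erase hx
        omega
      have e2 : ∑ b ∈ B.erase 0, 2 * b = 2 * ∑ b ∈ B.erase 0, b := by
        rw [Finset.mul_sum]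
      omega
    · have e1 : ∑ b ∈ B, (b + 1) + ∑ b ∈ B, (b - 1) = ∑ b ∈ B, 2 * b := by
        rw [← Finset.sum_add_distrib]
        apply Finset.sum_congr rfl
        intro x hx
        have : x ≠ 0 := fun h => h0 (h ▸ hx)
        omega
      have e2 : ∑ b ∈ B, 2 * b = 2 * ∑ b ∈ B, b := by
        rw [Finset.mul_sum]
      omega
  rw [hperA]
  omega
end

section
/- For all n ≥ 1, (P(n) − 1)/2 ≤ Q(n) ≤ 2·P(n) + 1, where P(n) = min{per(A) : A ⊆ ℕ, vol(A) = n} and Q(n) = min{per(A^c) : A ⊆ ℕ, vol(A) = n}. -/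
open scoped BigOperators

lemma my_bdry_subset (A : Set ℕ) : bdry A ⊆ A := fun _ hz => hz.1

lemma my_finite_of_vol_ne_zero {A : Set ℕ} (h : vol A ≠ 0) : A.Finite := by
  by_contra hinf
  apply h
  rw [vol]
  apply finsum_mem_eq_zero_of_infinite
  have hd : (A \ {0}).Infinite := Set.Infinite.diff hinf (Set.finite_singleton 0)
  refine hd.mono ?_
  intro z hz
  exact ⟨hz.1, by simpa [Function.support] using hz.2⟩

lemma my_bdry_compl_finite {A : Set ℕ} (hA : A.Finite) : (bdry Aᶜ).Finite := by
  have hsub : bdry Aᶜ ⊆ {0} ∪ (fun a => a + 1) '' A ∪ (fun a => a - 1) '' A := by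
    rintro z ⟨hz, hz2⟩
    by_cases h0 : z = 0
    · exact Or.inl (Or.inl (by simp [h0]))
    have hz1 : 1 ≤ z := Nat.one_le_iff_ne_zero.mpr h0
    by_cases h1 : z - 1 ∈ A
    · exact Or.inl (Or.inr ⟨z - 1, h1, show z - 1 + 1 = z by omega⟩)
    · have h2 : z + 1 ∈ A := by
        by_contra h2
        exact hz2 ⟨hz1, h1, h2⟩
      exact Or.inr ⟨z + 1, h2, show z + 1 - 1 = z by omega⟩
  exact Set.Finite.subset (((Set.finite_singleton 0).union (hA.image _)).union (hA.image _)) hsub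

lemma my_per_le {A : Set ℕ} (h1 : (bdry A).Finite) (h2 : (bdry Aᶜ).Finite) :
    per A ≤ 2 * per Aᶜ + 1 := by
  classical
  rw [per, per, finsum_mem_eq_finite_toFinset_sum _ h1, finsum_mem_eq_finite_toFinset_sum _ h2]
  set S := h1.toFinset with hS
  set T := h2.toFinset with hT
  set S1 := S.filter (fun z => 1 ≤ z ∧ z - 1 ∉ A) with hS1
  set S2 := S.filter (fun z => 1 ≤ z ∧ z - 1 ∈ A) with hS2
  set I1 := S1.image (fun z => z - 1) with hI1
  set I2 := S2.image (fun z => z + 1) with hI2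
  have hSmem : ∀ z, z ∈ S ↔ z ∈ bdry A := fun z => by simp [hS]
  have hTmem : ∀ w, w ∈ T ↔ w ∈ bdry Aᶜ := fun w => by simp [hT]
  -- I1 ⊆ T
  have hI1T : I1 ⊆ T := by
    intro w hw
    simp only [hI1, Finset.mem_image] at hw
    obtain ⟨z, hz, rfl⟩ := hw
    rw [hS1, Finset.mem_filter] at hz
    obtain ⟨hzS, hz1, hz2⟩ := hz
    rw [hSmem] at hzS
    rw [hTmem]
    refine ⟨hz2, ?_⟩
    rintro ⟨-, -, hc⟩
    have he : z - 1 + 1 = z := by omega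
    rw [he] at hc
    exact hc hzS.1
  -- I2 ⊆ T
  have hI2T : I2 ⊆ T := by
    intro w hw
    simp only [hI2, Finset.mem_image] at hw
    obtain ⟨z, hz, rfl⟩ := hw
    rw [hS2, Finset.mem_filter] at hz
    obtain ⟨hzS, hz1, hz2⟩ := hz
    rw [hSmem] at hzS
    have hz3 : z + 1 ∉ A := fun hc => hzS.2 ⟨hz1, hz2, hc⟩
    rw [hTmem]
    refine ⟨hz3, ?_⟩
    rintro ⟨-, hc, -⟩
    have he : z + 1 - 1 = z := by omega
    rw [he] at hc
    exact hc hzS.1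
  have h0I2 : (0 : ℕ) ∉ I2 := by
    simp only [hI2, Finset.mem_image]
    rintro ⟨z, -, hc⟩
    omega
  -- split the sum over S
  have hdisj : Disjoint S1 S2 := by
    rw [Finset.disjoint_left]
    intro a ha hb
    rw [hS1, Finset.mem_filter] at ha
    rw [hS2, Finset.mem_filter] at hb
    exact ha.2.2 hb.2.2
  have e0 : ∑ z ∈ S, z = ∑ z ∈ S1, z + ∑ z ∈ S2, z := by
    rw [← Finset.sum_union hdisj]
    symm
    apply Finset.sum_subset
    · intro z hz
      rw [Finset.mem_union, hS1, hS2, Finset.mem_filter, Finset.mem_filter] at hz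
      rcases hz with h | h
      exacts [h.1, h.1]
    · intro z hz hz'
      rw [Finset.mem_union, hS1, hS2, Finset.mem_filter, Finset.mem_filter] at hz'
      by_contra hne
      have hz1 : 1 ≤ z := by omega
      by_cases hm : z - 1 ∈ A
      · exact hz' (Or.inr ⟨hz, hz1, hm⟩)
      · exact hz' (Or.inl ⟨hz, hz1, hm⟩)
  have e1 : ∑ z ∈ S1, z = ∑ w ∈ I1, (w + 1) := by
    rw [hI1, Finset.sum_image]
    · apply Finset.sum_congr rfl
      intro z hz
      rw [hS1, Finset.mem_filter] at hz
      omega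
    · intro x hx y hy hxy
      rw [hS1, Finset.mem_coe, Finset.mem_filter] at hx hy
      simp only at hxy
      omega
  have e2 : ∑ z ∈ S2, z = ∑ w ∈ I2, (w - 1) := by
    rw [hI2, Finset.sum_image]
    · apply Finset.sum_congr rfl
      intro z _
      omega
    · intro x _ y _ hxy
      simp only at hxy
      omega
  -- rewrite image sums as sums over T
  have f1 : ∑ w ∈ I1, (w + 1) = ∑ w ∈ T, (if w ∈ I1 then w + 1 else 0) := by
    rw [Finset.sum_ite_mem, Finset.inter_eq_right.mpr hI1T]
  have f2 : ∑ w ∈ I2, (w - 1) = ∑ w ∈ T, (if w ∈ I2 then w - 1 else 0) := by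
    rw [Finset.sum_ite_mem, Finset.inter_eq_right.mpr hI2T]
  rw [e0, e1, e2, f1, f2, ← Finset.sum_add_distrib]
  have key : ∀ w ∈ T,
      (if w ∈ I1 then w + 1 else 0) + (if w ∈ I2 then w - 1 else 0)
        ≤ 2 * w + (if w = 0 then 1 else 0) := by
    intro w _
    by_cases h0 : w = 0
    · subst h0
      simp only [h0I2, if_false, if_true]
      split_ifs <;> omega
    · by_cases hw1 : w ∈ I1 <;> by_cases hw2 : w ∈ I2 <;> simp [hw1, hw2, h0] <;> omega
  calc ∑ w ∈ T, ((if w ∈ I1 then w + 1 else 0) + (if w ∈ I2 then w - 1 else 0))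
      ≤ ∑ w ∈ T, (2 * w + (if w = 0 then 1 else 0)) := Finset.sum_le_sum key
    _ = 2 * ∑ w ∈ T, w + ∑ w ∈ T, (if w = 0 then 1 else 0) := by
        rw [Finset.sum_add_distrib, Finset.mul_sum]
    _ ≤ 2 * ∑ w ∈ T, w + 1 := by
        have : ∑ w ∈ T, (if w = 0 then 1 else 0) ≤ 1 := by
          rw [Finset.sum_ite_eq' T (0 : ℕ) (fun _ => 1)]
          split_ifs <;> omega
        omega

theorem stmt_4 (n : ℕ) (hn : 1 ≤ n) :
    ((P n : ℝ) - 1) / 2 ≤ (Q n : ℝ) ∧ (Q n : ℝ) ≤ 2 * (P n : ℝ) + 1 := by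
  have hvoln : vol ({n} : Set ℕ) = n := by rw [vol, finsum_mem_singleton]
  have hPne : {p | ∃ A : Set ℕ, vol A = n ∧ per A = p}.Nonempty :=
    ⟨per ({n} : Set ℕ), ⟨{n}, hvoln, rfl⟩⟩
  have hQne : {p | ∃ A : Set ℕ, vol A = n ∧ per Aᶜ = p}.Nonempty :=
    ⟨per (({n} : Set ℕ))ᶜ, ⟨{n}, hvoln, rfl⟩⟩
  have hPd : P n = sInf {p | ∃ A : Set ℕ, vol A = n ∧ per A = p} := rfl
  have hQd : Q n = sInf {p | ∃ A : Set ℕ, vol A = n ∧ per Aᶜ = p} := rfl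
  obtain ⟨A, hAvol, hAper⟩ := Nat.sInf_mem hPne
  rw [← hPd] at hAper
  obtain ⟨B, hBvol, hBper⟩ := Nat.sInf_mem hQne
  rw [← hQd] at hBper
  have hAfin : A.Finite := my_finite_of_vol_ne_zero (by rw [hAvol]; omega)
  have hBfin : B.Finite := my_finite_of_vol_ne_zero (by rw [hBvol]; omega)
  have hA1 : (bdry A).Finite := hAfin.subset (my_bdry_subset A)
  have hA2 : (bdry Aᶜ).Finite := my_bdry_compl_finite hAfin
  have hB1 : (bdry B).Finite := hBfin.subset (my_bdry_subset B)
  have hB2 : (bdry Bᶜ).Finite := my_bdry_compl_finite hBfin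
  have hQle : Q n ≤ 2 * P n + 1 := by
    have hc : per Aᶜ ≤ 2 * per A + 1 := by
      have := my_per_le (A := Aᶜ) hA2 (by rwa [compl_compl])
      rwa [compl_compl] at this
    have hle : Q n ≤ per Aᶜ := hQd ▸ Nat.sInf_le ⟨A, hAvol, rfl⟩
    omega
  have hPle : P n ≤ 2 * Q n + 1 := by
    have hc : per B ≤ 2 * per Bᶜ + 1 := my_per_le hB1 hB2
    have hle : P n ≤ per B := hPd ▸ Nat.sInf_le ⟨B, hBvol, rfl⟩
    omega
  have c1 : (P n : ℝ) ≤ 2 * (Q n : ℝ) + 1 := by exact_mod_cast hPle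
  have c2 : (Q n : ℝ) ≤ 2 * (P n : ℝ) + 1 := by exact_mod_cast hQle
  constructor <;> linarith
end

section
/- If A is a finite nonempty subset of ℕ with maximum element m, then m + 1 ≤ per(A^c), with equality if and only if {1, 2, …, m} ⊆ A. -/
open scoped BigOperators

theorem stmt_5 (A : Set ℕ) (hA : A.Finite) (hne : A.Nonempty) (m : ℕ)
    (hm : IsGreatest A m) :
    m + 1 ≤ per Aᶜ ∧ (per Aᶜ = m + 1 ↔ ∀ k, 1 ≤ k → k ≤ m → k ∈ A) := by
  have hmA : m ∈ A := hm.1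
  have hub : ∀ x ∈ A, x ≤ m := hm.2
  -- m+1 is in the boundary of Aᶜ
  have hm1 : m + 1 ∈ bdry Aᶜ := by
    refine ⟨fun h => by have := hub _ h; omega, ?_⟩
    rintro ⟨-, h1, -⟩
    simp only [Nat.add_sub_cancel, Set.mem_compl_iff] at h1
    exact h1 hmA
  -- boundary is bounded by m+1
  have hsub : bdry Aᶜ ⊆ Set.Iic (m + 1) := by
    rintro z ⟨hz, hz2⟩
    by_contra h
    simp only [Set.mem_Iic] at h
    push_neg at h
    refine hz2 ⟨by omega, fun h1 => ?_, fun h1 => ?_⟩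
    · have := hub _ h1; omega
    · have := hub _ h1; omega
  have hfin : (bdry Aᶜ).Finite := (Set.finite_Iic (m + 1)).subset hsub
  have hper : per Aᶜ = ∑ z ∈ hfin.toFinset, z := by
    rw [per, finsum_mem_eq_finite_toFinset_sum _ hfin]
  have hm1' : m + 1 ∈ hfin.toFinset := hfin.mem_toFinset.mpr hm1
  have hge : m + 1 ≤ per Aᶜ := by
    rw [hper]
    exact Finset.single_le_sum (f := fun z => z) (fun _ _ => Nat.zero_le _) hm1'
  refine ⟨hge, ?_, ?_⟩
  · -- per = m+1 → all of [1,m] in A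
    intro heq k hk1 hkm
    by_contra hk
    -- B = Aᶜ ∩ [1,m] is nonempty; take its max j, then j ∈ bdry Aᶜ
    have hBfin : (Aᶜ ∩ Set.Icc 1 m).Finite := (Set.finite_Icc 1 m).inter_of_right _
    have hBne : (Aᶜ ∩ Set.Icc 1 m).Nonempty := ⟨k, hk, hk1, hkm⟩
    obtain ⟨j, hj, hjmax⟩ := Set.Finite.exists_maximalFor id _ hBfin hBne
    obtain ⟨hjA, hj1, hjm⟩ := hj
    have hjlt : j < m := lt_of_le_of_ne hjm (fun h => hjA (h ▸ hmA))
    have hjb : j ∈ bdry Aᶜ := by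
      refine ⟨hjA, ?_⟩
      rintro ⟨-, -, hsucc⟩
      have := hjmax (j := j + 1) ⟨hsucc, by omega, by omega⟩ (by simp)
      simp only [id] at this
      omega
    have hjb' : j ∈ hfin.toFinset := hfin.mem_toFinset.mpr hjb
    have : j + (m + 1) ≤ per Aᶜ := by
      rw [hper]
      have : ({j, m + 1} : Finset ℕ) ⊆ hfin.toFinset := by
        intro x hx
        simp only [Finset.mem_insert, Finset.mem_singleton] at hx
        rcases hx with rfl | rfl <;> assumption
      calc j + (m + 1) = ∑ z ∈ ({j, m + 1} : Finset ℕ), z := by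
            rw [Finset.sum_pair (by omega)]
        _ ≤ _ := Finset.sum_le_sum_of_subset this
    omega
  · -- all of [1,m] in A → per = m+1
    intro h
    have hsub2 : hfin.toFinset ⊆ ({0, m + 1} : Finset ℕ) := by
      intro z hz
      rw [hfin.mem_toFinset] at hz
      have hz1 := hsub hz
      simp only [Set.mem_Iic] at hz1
      obtain ⟨hzA, -⟩ := hz
      simp only [Finset.mem_insert, Finset.mem_singleton]
      by_contra hc
      push_neg at hc
      exact hzA (h z (by omega) (by omega))
    refine le_antisymm ?_ hge
    rw [hper]
    calc ∑ z ∈ hfin.toFinset, z ≤ ∑ z ∈ ({0, m + 1} : Finset ℕ), z :=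
          Finset.sum_le_sum_of_subset hsub2
      _ = m + 1 := by rw [Finset.sum_pair (by omega)]; omega
end

section
/- If A is a finite nonempty subset of ℕ, then per(A^c) ≥ (-1 + √(1 + 8·vol(A)))/2 + 1, and consequently for all n ≥ 1, Q(n) ≥ √2 · n^{1/2} + 1/2. -/
open scoped BigOperators

lemma main_bd (A : Set ℕ) (hA : A.Finite) (hne : A.Nonempty) :
    (-1 + Real.sqrt (1 + 8 * (vol A : ℝ))) / 2 + 1 ≤ (per Aᶜ : ℝ) := by
  have hne' : hA.toFinset.Nonempty := by simpa using hne
  set M := hA.toFinset.max' hne' with hM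
  have hMA : M ∈ A := by
    have := hA.toFinset.max'_mem hne'; simpa using this
  have hle : ∀ a ∈ A, a ≤ M := fun a ha =>
    hA.toFinset.le_max' a (by simpa using ha)
  -- volume bound
  have hvol : vol A = ∑ z ∈ hA.toFinset, z := by
    rw [vol, finsum_mem_eq_finite_toFinset_sum _ hA]
  have hsub : hA.toFinset ⊆ Finset.range (M + 1) := by
    intro a ha
    simp only [Set.Finite.mem_toFinset] at ha
    exact Finset.mem_range.2 (Nat.lt_succ_of_le (hle a ha))
  have h2V : 2 * vol A ≤ (M + 1) * M := by
    have h1 : vol A ≤ ∑ z ∈ Finset.range (M + 1), z := by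
      rw [hvol]
      exact Finset.sum_le_sum_of_subset hsub
    have h2 : (∑ z ∈ Finset.range (M + 1), z) * 2 = (M + 1) * M := by
      rw [Finset.sum_range_id_mul_two]; simp
    omega
  -- boundary finiteness
  have hbd_sub : bdry Aᶜ ⊆ insert 0 ((fun x => x + 1) '' A ∪ (fun x => x - 1) '' A) := by
    intro z hz
    obtain ⟨hz1, hz2⟩ := hz
    by_cases h0 : z = 0
    · exact Or.inl h0
    · right
      push_neg at hz2
      have h1 : 1 ≤ z := Nat.one_le_iff_ne_zero.2 h0
      by_cases hzm : z - 1 ∈ Aᶜ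
      · have := hz2 h1 hzm
        have hz1A : z + 1 ∈ A := not_not.1 this
        exact Or.inr ⟨z + 1, hz1A, by show z + 1 - 1 = z; omega⟩
      · have hz1A : z - 1 ∈ A := not_not.1 hzm
        exact Or.inl ⟨z - 1, hz1A, by show z - 1 + 1 = z; omega⟩
  have hbd_fin : (bdry Aᶜ).Finite :=
    Set.Finite.subset (((hA.image _).union (hA.image _)).insert 0) hbd_sub
  -- M+1 in boundary
  have hmem : M + 1 ∈ bdry Aᶜ := by
    constructor
    · intro h; exact absurd (hle _ h) (by omega)
    · intro ⟨_, hm, _⟩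
      exact hm (by simpa using hMA)
  have hper : (M + 1 : ℕ) ≤ per Aᶜ := by
    rw [per, finsum_mem_eq_finite_toFinset_sum _ hbd_fin]
    exact Finset.single_le_sum (f := fun z => z) (fun i _ => Nat.zero_le i)
      (by simpa using hmem)
  -- real arithmetic
  have hVr : (2 : ℝ) * (vol A : ℝ) ≤ ((M : ℝ) + 1) * M := by
    exact_mod_cast h2V
  have hsq : Real.sqrt (1 + 8 * (vol A : ℝ)) ≤ 2 * M + 1 := by
    rw [show (2 * (M : ℝ) + 1) = Real.sqrt ((2 * M + 1) ^ 2) from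
      (Real.sqrt_sq (by positivity)).symm]
    apply Real.sqrt_le_sqrt
    nlinarith
  have hperR : (M : ℝ) + 1 ≤ (per Aᶜ : ℝ) := by exact_mod_cast hper
  linarith

theorem stmt_6 :
    (∀ A : Set ℕ, A.Finite → A.Nonempty →
      (-1 + Real.sqrt (1 + 8 * (vol A : ℝ))) / 2 + 1 ≤ (per Aᶜ : ℝ)) ∧
    (∀ n : ℕ, 1 ≤ n → Real.sqrt 2 * Real.sqrt n + 1 / 2 ≤ (Q n : ℝ)) := by
  refine ⟨main_bd, fun n hn => ?_⟩
  have hne : {p | ∃ A : Set ℕ, vol A = n ∧ per Aᶜ = p}.Nonempty :=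
    ⟨per ({n} : Set ℕ)ᶜ, {n}, by rw [vol, finsum_mem_singleton], rfl⟩
  obtain ⟨A, hvA, hpA⟩ := Nat.sInf_mem hne
  -- A is finite
  have hfin : A.Finite := by
    by_contra hinf
    have : vol A = 0 := by
      rw [vol]
      apply finsum_mem_eq_zero_of_infinite
      have : (A ∩ Function.support (fun z : ℕ => z)) = A \ {0} := by
        ext x; simp [Function.mem_support]
      rw [this]
      exact Set.Infinite.diff hinf (Set.finite_singleton 0)
    omega
  have hAne : A.Nonempty := by
    rcases A.eq_empty_or_nonempty with h | h
    · exfalso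
      have : vol A = 0 := by rw [h, vol]; simp
      omega
    · exact h
  have hmain := main_bd A hfin hAne
  rw [hvA] at hmain
  rw [Q, ← hpA]
  -- sqrt arithmetic
  have e1 : Real.sqrt 2 * Real.sqrt n = Real.sqrt (2 * n) :=
    (Real.sqrt_mul (by norm_num) _).symm
  have e2 : Real.sqrt (8 * n) = 2 * Real.sqrt (2 * n) := by
    rw [show (8 : ℝ) * n = 2 ^ 2 * (2 * n) by ring, Real.sqrt_mul (by positivity),
      Real.sqrt_sq (by norm_num)]
  have e3 : Real.sqrt (8 * n) ≤ Real.sqrt (1 + 8 * n) :=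
    Real.sqrt_le_sqrt (by linarith)
  linarith
end

section
/- If n = t(t+1)/2 is a triangular number with t ≥ 0, then P(n) = t. -/
open scoped BigOperators

lemma gauss_sum (t : ℕ) : ∑ i ∈ Finset.range (t+1), i = t * (t+1) / 2 := by
  rw [Finset.sum_range_id, Nat.add_sub_cancel, Nat.mul_comm]

lemma witness (t : ℕ) : vol ↑(Finset.range (t+1)) = t * (t+1) / 2 ∧
    per ↑(Finset.range (t+1)) = t := by
  constructor
  · rw [vol, finsum_mem_coe_finset, gauss_sum]
  · have hb : bdry ↑(Finset.range (t+1)) = ↑({0, t} : Finset ℕ) := by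
      ext z
      simp only [bdry, Set.mem_setOf_eq, Finset.coe_range, Set.mem_Iio, Finset.coe_insert,
        Finset.coe_singleton, Set.mem_insert_iff, Set.mem_singleton_iff]
      omega
    rw [per, hb, finsum_mem_coe_finset]
    rcases Nat.eq_zero_or_pos t with h | h
    · subst h; simp
    · rw [Finset.sum_pair (by omega)]; omega

theorem stmt_7 (t : ℕ) : P (t * (t + 1) / 2) = t := by
  obtain ⟨hw1, hw2⟩ := witness t
  apply le_antisymm
  · exact Nat.sInf_le ⟨_, hw1, hw2⟩
  · refine le_csInf ⟨t, ⟨_, hw1, hw2⟩⟩ ?_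
    rintro p ⟨A, hvol, hper⟩
    rcases Nat.eq_zero_or_pos t with ht | ht
    · subst ht; exact Nat.zero_le _
    have hn : 0 < t * (t+1) / 2 := by
      have h2 : 2 ≤ t * (t+1) := by nlinarith
      exact Nat.div_pos h2 (by norm_num)
    have hfin : (A ∩ Function.support (fun z : ℕ => z)).Finite := by
      by_contra h
      rw [vol, finsum_mem_eq_zero_of_infinite h] at hvol
      omega
    have hvs : vol A = ∑ z ∈ hfin.toFinset, z := finsum_mem_eq_sum _ hfin
    have hne : hfin.toFinset.Nonempty := by
      rcases Finset.eq_empty_or_nonempty hfin.toFinset with h | h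
      · rw [h, Finset.sum_empty] at hvs; omega
      · exact h
    set m := hfin.toFinset.max' hne with hmdef
    have hm : m ∈ hfin.toFinset := hfin.toFinset.max'_mem hne
    have hmax : ∀ x ∈ hfin.toFinset, x ≤ m := fun x hx => Finset.le_max' _ x hx
    rw [Set.Finite.mem_toFinset] at hm
    obtain ⟨hmA, hm0⟩ := hm
    have hm0' : m ≠ 0 := hm0
    have hm1 : m + 1 ∉ A := by
      intro h
      have : m + 1 ∈ hfin.toFinset := by
        rw [Set.Finite.mem_toFinset]; exact ⟨h, by simp⟩
      have := hmax _ this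
      omega
    have hmbdry : m ∈ bdry A := ⟨hmA, fun ⟨_, _, h3⟩ => hm1 h3⟩
    have hbfin : (bdry A ∩ Function.support (fun z : ℕ => z)).Finite :=
      hfin.subset (fun z hz => ⟨hz.1.1, hz.2⟩)
    have hmp : m ≤ per A := by
      rw [per, finsum_mem_eq_sum _ hbfin]
      exact Finset.single_le_sum (fun i _ => Nat.zero_le i)
        (by rw [Set.Finite.mem_toFinset]; exact ⟨hmbdry, hm0'⟩)
    have hsub : hfin.toFinset ⊆ Finset.range (m+1) := fun z hz =>
      Finset.mem_range.2 (Nat.lt_succ_of_le (hmax z hz))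
    have hle : t * (t+1) / 2 ≤ ∑ i ∈ Finset.range (m+1), i := by
      rw [← hvol, hvs]
      exact Finset.sum_le_sum_of_subset hsub
    have htm : t ≤ m := by
      by_contra h
      push_neg at h
      have h2 : ∑ i ∈ Finset.range (m+2), i ≤ t * (t+1) / 2 := by
        rw [← gauss_sum]
        exact Finset.sum_le_sum_of_subset (Finset.range_subset_range.2 (by omega))
      rw [Finset.sum_range_succ] at h2
      omega
    omega
end

section
/- Define f(n) = ⌈(−1+√(1+8n))/2⌉ and g(n) = f(n)(f(n)+1)/2 − n. Then for all integers L ≥ 0 and n ≥ 0, the L-fold iterate g^L(n) satisfies g^L(n) ≤ 2·(n/2)^{1/2^L}. -/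
open scoped BigOperators

lemma gA (m : ℕ) : (g m : ℝ) ≤ 2 * Real.sqrt ((m : ℝ) / 2) := by
  rcases Nat.eq_zero_or_pos m with rfl | hm
  · have h0 : g 0 = 0 := by
      unfold g f
      norm_num
    simp [h0]
  · set x : ℝ := (-1 + Real.sqrt (1 + 8 * m)) / 2 with hx
    set k : ℕ := f m with hk
    have hm1 : (1 : ℝ) ≤ (m : ℝ) := by exact_mod_cast hm
    have hs3 : (3 : ℝ) ≤ Real.sqrt (1 + 8 * m) := by
      rw [show (3:ℝ) = Real.sqrt 9 by
        rw [show (9:ℝ) = 3^2 by norm_num, Real.sqrt_sq]; norm_num]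
      exact Real.sqrt_le_sqrt (by linarith)
    have hx1 : (1 : ℝ) ≤ x := by rw [hx]; linarith
    have hceil : (1 : ℤ) ≤ ⌈x⌉ := by
      exact_mod_cast Int.one_le_ceil_iff.mpr (by linarith)
    have hkc : (k : ℝ) = (⌈x⌉ : ℝ) := by
      rw [hk]
      unfold f
      rw [← hx]
      have h : (⌈x⌉.toNat : ℤ) = ⌈x⌉ := Int.toNat_of_nonneg (by linarith)
      exact_mod_cast h
    have hk1 : 1 ≤ k := by
      have : (1:ℝ) ≤ (k:ℝ) := by rw [hkc]; exact_mod_cast hceil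
      exact_mod_cast this
    -- k < x + 1
    have hlt : (k : ℝ) < x + 1 := by
      rw [hkc]; exact Int.ceil_lt_add_one x
    -- square: (2k-1)^2 < 1 + 8m
    have hsq : ((2:ℝ)*k - 1)^2 < 1 + 8*m := by
      have h1 : (2:ℝ)*k - 1 < Real.sqrt (1 + 8*m) := by rw [hx] at hlt; linarith
      have h2 : (0:ℝ) ≤ 2*k - 1 := by
        have : (1:ℝ) ≤ (k:ℝ) := by exact_mod_cast hk1
        linarith
      have h3 := Real.sq_sqrt (show (0:ℝ) ≤ 1 + 8*m by positivity)
      nlinarith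
    have hnat : 4*(k*k) < 8*m + 4*k := by
      have : (4:ℝ)*(k*k) < 8*m + 4*k := by nlinarith
      exact_mod_cast this
    have hgle : g m ≤ k - 1 := by
      have hmul : k*(k+1) = k*k + k := by ring
      have heven : k*(k+1) % 2 = 0 := Nat.even_iff.mp (Nat.even_mul_succ_self k)
      show f m * (f m + 1) / 2 - m ≤ k - 1
      rw [← hk]
      omega
    have hgR : (g m : ℝ) ≤ (k : ℝ) - 1 := by
      have h : ((g m : ℕ) : ℝ) ≤ ((k - 1 : ℕ) : ℝ) := Nat.cast_le.mpr hgle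
      rwa [Nat.cast_sub hk1, Nat.cast_one] at h
    -- x ≤ 2 * sqrt(m/2)
    have hxle : x ≤ 2 * Real.sqrt ((m:ℝ)/2) := by
      have h2 := Real.sq_sqrt (show (0:ℝ) ≤ (m:ℝ)/2 by positivity)
      have h3 := Real.sqrt_nonneg ((m:ℝ)/2)
      have h4 : Real.sqrt (1 + 8*(m:ℝ)) ≤ 1 + 4*Real.sqrt ((m:ℝ)/2) := by
        have h5 : Real.sqrt (1+8*(m:ℝ)) ≤ Real.sqrt ((1 + 4*Real.sqrt ((m:ℝ)/2))^2) :=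
          Real.sqrt_le_sqrt (by nlinarith)
        rwa [Real.sqrt_sq (by positivity)] at h5
      rw [hx]; linarith
    linarith

theorem stmt_13 (L n : ℕ) :
    ((g^[L] n : ℕ) : ℝ) ≤ 2 * ((n : ℝ) / 2) ^ ((1 : ℝ) / 2 ^ L) := by
  induction L with
  | zero =>
    simp only [Function.iterate_zero, id_eq, pow_zero, div_one, Real.rpow_one]
    linarith
  | succ L ih =>
    rw [Function.iterate_succ_apply']
    set m := g^[L] n with hm
    have hA := gA m
    have hm2 : ((m:ℝ))/2 ≤ ((n:ℝ)/2) ^ ((1:ℝ)/2^L) := by linarith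
    have hs : Real.sqrt ((m:ℝ)/2) ≤ Real.sqrt (((n:ℝ)/2) ^ ((1:ℝ)/2^L)) :=
      Real.sqrt_le_sqrt hm2
    have hrw : Real.sqrt (((n:ℝ)/2) ^ ((1:ℝ)/2^L)) = ((n:ℝ)/2) ^ ((1:ℝ)/2^(L+1)) := by
      rw [Real.sqrt_eq_rpow, ← Real.rpow_mul (by positivity)]
      congr 1
      rw [pow_succ]
      ring
    rw [hrw] at hs
    linarith
end

section
/- For all n ≥ 0, P(n) ≤ f(n) + Q(g(n)), where f(n) = ⌈(−1+√(1+8n))/2⌉ and g(n) = f(n)(f(n)+1)/2 − n. -/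
open scoped BigOperators

lemma f_upper (n : ℕ) : 2 * n ≤ f n * (f n + 1) := by
  set s : ℝ := Real.sqrt (1 + 8 * n) with hsdef
  have hs : s ^ 2 = 1 + 8 * n := Real.sq_sqrt (by positivity)
  have hs0 : 0 ≤ s := Real.sqrt_nonneg _
  have hs1 : 1 ≤ s := by nlinarith [hs, hs0]
  set x : ℝ := (-1 + s) / 2 with hxdef
  have hx0 : 0 ≤ x := by simp only [hxdef]; linarith
  have h2n : x * (x + 1) = 2 * n := by simp only [hxdef]; linear_combination hs / 4
  have hm : x ≤ (f n : ℝ) := by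
    have h1 : x ≤ (⌈x⌉ : ℝ) := Int.le_ceil x
    have h2 : (⌈x⌉ : ℝ) ≤ ((⌈x⌉.toNat : ℤ) : ℝ) := by exact_mod_cast Int.self_le_toNat _
    calc x ≤ (⌈x⌉ : ℝ) := h1
    _ ≤ _ := by push_cast at h2 ⊢; exact h2
  have : (2 * n : ℝ) ≤ (f n : ℝ) * ((f n : ℝ) + 1) := by
    nlinarith [mul_nonneg (sub_nonneg.mpr hm) (by linarith : (0:ℝ) ≤ (f n : ℝ) + x + 1)]
  exact_mod_cast this

lemma f_lower (n : ℕ) (hn : 0 < n) : f n * f n < 2 * n + f n := by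
  rcases Nat.eq_zero_or_pos (f n) with h0 | h0
  · rw [h0]; omega
  set s : ℝ := Real.sqrt (1 + 8 * n) with hsdef
  have hs : s ^ 2 = 1 + 8 * n := Real.sq_sqrt (by positivity)
  have hs0 : 0 ≤ s := Real.sqrt_nonneg _
  have hs3 : 3 ≤ s := by nlinarith [hs, hs0, (by exact_mod_cast hn : (1:ℝ) ≤ (n:ℝ))]
  set x : ℝ := (-1 + s) / 2 with hxdef
  have hx0 : (1:ℝ) ≤ x := by simp only [hxdef]; linarith
  have h2n : x * (x + 1) = 2 * n := by simp only [hxdef]; linear_combination hs / 4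
  have hceil : (⌈x⌉ : ℤ).toNat = f n := rfl
  have hnn : (0:ℤ) ≤ ⌈x⌉ := Int.ceil_nonneg (by linarith)
  have hfn : ((f n : ℕ) : ℝ) = ((⌈x⌉ : ℤ) : ℝ) := by
    rw [← hceil]; exact_mod_cast congrArg (fun z : ℤ => (z : ℝ)) (Int.toNat_of_nonneg hnn)
  have h1 : ((f n : ℕ) : ℝ) < x + 1 := by rw [hfn]; exact Int.ceil_lt_add_one x
  have hfpos : (0:ℝ) < (f n : ℝ) := by exact_mod_cast h0
  have : ((f n : ℕ) : ℝ) * (f n : ℝ) < 2 * n + (f n : ℝ) := by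
    nlinarith [mul_lt_mul_of_pos_left h1 hfpos, mul_lt_mul_of_pos_right h1 (by linarith : (0:ℝ) < x)]
  exact_mod_cast this

lemma key_s14 (m : ℕ) (hm : 1 ≤ m) (S : Set ℕ) (hS : ∀ z ∈ S, z ≠ 0 → z < m) :
    vol {z | z ≤ m ∧ z ∉ S} = m * (m + 1) / 2 - vol S ∧
      per {z | z ≤ m ∧ z ∉ S} ≤ m + per Sᶜ := by
  classical
  set A : Set ℕ := {z | z ≤ m ∧ z ∉ S} with hAdef
  have hAco : A = ↑((Finset.range (m + 1)).filter (fun z => z ∉ S)) := by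
    ext z
    simp only [hAdef, Finset.coe_filter, Finset.mem_range, Set.mem_setOf_eq, Nat.lt_succ_iff]
  have hSco : S = ↑((Finset.range (m + 1)).filter (fun z => z ∈ S)) := by
    ext z
    simp only [Finset.coe_filter, Finset.mem_range, Set.mem_setOf_eq, Nat.lt_succ_iff]
    constructor
    · intro hz
      refine ⟨?_, hz⟩
      rcases eq_or_ne z 0 with rfl | h0
      · omega
      · exact le_of_lt (hS z hz h0)
    · exact fun h => h.2
  have hvolA : vol A = ∑ z ∈ (Finset.range (m + 1)).filter (fun z => z ∉ S), z := by
    rw [hAco]; exact finsum_mem_coe_finset _ _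
  have hvolS : vol S = ∑ z ∈ (Finset.range (m + 1)).filter (fun z => z ∈ S), z := by
    conv_lhs => rw [hSco]
    exact finsum_mem_coe_finset _ _
  have htot : (∑ z ∈ (Finset.range (m + 1)).filter (fun z => z ∈ S), z) +
      (∑ z ∈ (Finset.range (m + 1)).filter (fun z => z ∉ S), z) = m * (m + 1) / 2 := by
    rw [Finset.sum_filter_add_sum_filter_not, Finset.sum_range_id]
    simp [Nat.mul_comm]
  constructor
  · omega
  · have hbA_fin : (bdry A).Finite := by
      apply (Set.finite_Iic m).subset
      intro z hz
      exact hz.1.1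
    have hbS_sub : bdry Sᶜ ⊆ Set.Iic m := by
      intro z hz
      by_contra h
      rw [Set.mem_Iic] at h
      push_neg at h
      refine hz.2 ⟨by omega, ?_, ?_⟩
      · intro hmem
        exact absurd (hS _ hmem (by omega)) (by omega)
      · intro hmem
        exact absurd (hS _ hmem (by omega)) (by omega)
    have hbS_fin : (bdry Sᶜ).Finite := (Set.finite_Iic m).subset hbS_sub
    have hperA : per A = ∑ z ∈ hbA_fin.toFinset, z :=
      finsum_mem_eq_finite_toFinset_sum _ hbA_fin
    have hperS : per Sᶜ = ∑ z ∈ hbS_fin.toFinset, z :=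
      finsum_mem_eq_finite_toFinset_sum _ hbS_fin
    have hsub : hbA_fin.toFinset ⊆ insert m hbS_fin.toFinset := by
      intro z hz
      rw [Set.Finite.mem_toFinset] at hz
      rcases eq_or_ne z m with rfl | hzm
      · exact Finset.mem_insert_self _ _
      · refine Finset.mem_insert_of_mem ?_
        rw [Set.Finite.mem_toFinset]
        obtain ⟨⟨hzle, hzS⟩, hnb⟩ := hz
        have hzlt : z < m := lt_of_le_of_ne hzle hzm
        refine ⟨hzS, ?_⟩
        rintro ⟨h1, h2, h3⟩
        exact hnb ⟨h1, ⟨by omega, h2⟩, ⟨by omega, h3⟩⟩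
    calc per A = ∑ z ∈ hbA_fin.toFinset, z := hperA
      _ ≤ ∑ z ∈ insert m hbS_fin.toFinset, z :=
          Finset.sum_le_sum_of_subset hsub
      _ ≤ m + ∑ z ∈ hbS_fin.toFinset, z := by
          by_cases hmem : m ∈ hbS_fin.toFinset
          · rw [Finset.insert_eq_self.mpr hmem]; omega
          · rw [Finset.sum_insert hmem]
      _ = m + per Sᶜ := by rw [hperS]

lemma vol_singleton (a : ℕ) : vol {a} = a := by
  unfold vol; exact finsum_mem_singleton

lemma per_univ_compl : per (∅ᶜ : Set ℕ) = 0 := by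
  have h : bdry (∅ᶜ : Set ℕ) = {0} := by
    ext z
    simp only [bdry, Set.mem_setOf_eq, Set.compl_empty, Set.mem_univ, true_and,
      Set.mem_singleton_iff, and_true]
    omega
  unfold per
  rw [h]
  exact finsum_mem_singleton

theorem stmt_14 (n : ℕ) : P n ≤ f n + Q (g n) := by
  classical
  rcases Nat.eq_zero_or_pos n with rfl | hn
  · have h0 : P 0 ≤ 0 := by
      apply Nat.sInf_le
      refine ⟨∅, ?_, ?_⟩
      · unfold vol; exact finsum_mem_empty
      · unfold per
        have : bdry (∅ : Set ℕ) = ∅ := by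
          ext z; simp [bdry]
        rw [this]; exact finsum_mem_empty
    omega
  · set m := f n with hmdef
    have hup := f_upper n
    have hlow := f_lower n hn
    have hup' : 2 * n ≤ m * (m + 1) := hup
    have hlow' : m * m < 2 * n + m := hlow
    have hmm : m * (m + 1) = m * m + m := by ring
    have hm1 : 1 ≤ m := by
      rcases Nat.eq_zero_or_pos m with h0 | h0
      · rw [h0] at hup'; omega
      · exact h0
    have hng : n ≤ m * (m + 1) / 2 := by
      rw [Nat.le_div_iff_mul_le (by norm_num)]
      omega
    have hTlt : m * (m + 1) / 2 < n + m := by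
      rw [Nat.div_lt_iff_lt_mul (by norm_num)]
      omega
    have hgdef : g n = m * (m + 1) / 2 - n := rfl
    have hglt : g n < m := by omega
    -- obtain a set S with vol S = g n, per Sᶜ ≤ Q (g n), and bounded elements
    obtain ⟨S, hvolS, hperS, hSb⟩ :
        ∃ S : Set ℕ, vol S = g n ∧ per Sᶜ ≤ Q (g n) ∧ ∀ z ∈ S, z ≠ 0 → z < m := by
      rcases Nat.eq_zero_or_pos (g n) with hg0 | hgpos
      · refine ⟨∅, ?_, ?_, ?_⟩
        · rw [hg0]; unfold vol; exact finsum_mem_empty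
        · rw [per_univ_compl]; exact Nat.zero_le _
        · intro z hz; exact absurd hz (Set.notMem_empty z)
      · have hne : {p | ∃ A : Set ℕ, vol A = g n ∧ per Aᶜ = p}.Nonempty :=
          ⟨per ({g n}ᶜ : Set ℕ), {g n}, vol_singleton _, rfl⟩
        obtain ⟨S, hvS, hpS⟩ := Nat.sInf_mem hne
        refine ⟨S, hvS, le_of_eq hpS, ?_⟩
        intro z hz hz0
        have hfin : (S ∩ Function.support (fun z : ℕ => z)).Finite := by
          by_contra hinf
          rw [vol, finsum_mem_eq_zero_of_infinite hinf] at hvS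
          omega
        have hsum : vol S = ∑ w ∈ hfin.toFinset, w := finsum_mem_eq_sum _ hfin
        have hzmem : z ∈ hfin.toFinset := by
          rw [Set.Finite.mem_toFinset]
          exact ⟨hz, by simpa [Function.mem_support] using hz0⟩
        have hzle : z ≤ vol S := by
          rw [hsum]
          exact Finset.single_le_sum (f := fun w => w) (fun i _ => Nat.zero_le i) hzmem
        omega
    obtain ⟨hvolA, hperA⟩ := key_s14 m hm1 S hSb
    have hvolA' : vol {z | z ≤ m ∧ z ∉ S} = n := by
      rw [hvolA, hvolS]
      omega
    have hPle : P n ≤ per {z | z ≤ m ∧ z ∉ S} :=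
      Nat.sInf_le ⟨{z | z ≤ m ∧ z ∉ S}, hvolA', rfl⟩
    calc P n ≤ per {z | z ≤ m ∧ z ∉ S} := hPle
      _ ≤ m + per Sᶜ := hperA
      _ ≤ m + Q (g n) := by omega
end

section
/- P(n) is asymptotic to √2 · n^{1/2} as n → ∞, i.e., P(n)/(√2 · √n) → 1. -/
open scoped BigOperators

/- ### Auxiliary lemmas -/

lemma aux_sum_insert_le (a : ℕ) (t : Finset ℕ) :
    ∑ x ∈ insert a t, x ≤ a + ∑ x ∈ t, x := by
  by_cases h : a ∈ t
  · rw [Finset.insert_eq_self.2 h]; exact Nat.le_add_left _ _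
  · rw [Finset.sum_insert h]

lemma aux_two_S (k : ℕ) : 2 * (∑ i ∈ Finset.range (k + 1), i) = k * (k + 1) := by
  rw [Nat.mul_comm, Finset.sum_range_id_mul_two, Nat.add_sub_cancel]
  exact Nat.mul_comm _ _

lemma aux_S_mono {a b : ℕ} (h : a ≤ b) :
    (∑ i ∈ Finset.range (a + 1), i) ≤ ∑ i ∈ Finset.range (b + 1), i :=
  Finset.sum_le_sum_of_subset (Finset.range_subset_range.2 (by omega))

lemma aux_sum_Icc (e m : ℕ) (h : e ≤ m) :
    ∑ x ∈ Finset.Icc (e + 1) m, x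
      = (∑ i ∈ Finset.range (m + 1), i) - ∑ i ∈ Finset.range (e + 1), i := by
  have key := Finset.sum_Ico_consecutive (fun i => i) (Nat.zero_le (e + 1))
    (by omega : e + 1 ≤ m + 1)
  beta_reduce at key
  have h1 : Finset.Icc (e + 1) m = Finset.Ico (e + 1) (m + 1) := (Finset.Ico_add_one_right_eq_Icc _ _).symm
  rw [h1]
  simp only [Finset.range_eq_Ico]
  omega

lemma aux_vol_coe (s : Finset ℕ) : vol ↑s = ∑ x ∈ s, x := by
  simpa [vol] using finsum_mem_coe_finset (fun x => x) s

/-- The key lower-bound estimate: volume is at most a triangular bound of perimeter. -/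
lemma aux_vol_le_per (A : Set ℕ) : 2 * vol A ≤ per A * (per A + 1) := by
  by_cases hA : A.Finite
  · have hb : (bdry A).Finite := hA.subset (fun z hz => hz.1)
    have hvol : vol A = ∑ x ∈ hA.toFinset, x :=
      finsum_mem_eq_finite_toFinset_sum (fun x => x) hA
    have hper : per A = ∑ x ∈ hb.toFinset, x :=
      finsum_mem_eq_finite_toFinset_sum (fun x => x) hb
    rcases Finset.eq_empty_or_nonempty hA.toFinset with h | h
    · rw [hvol, h]; simp
    · set M := hA.toFinset.max' h with hM
      have hMA : M ∈ A := hA.mem_toFinset.1 (hA.toFinset.max'_mem h)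
      have hMb : M ∈ bdry A := by
        refine ⟨hMA, ?_⟩
        rintro ⟨-, -, hsucc⟩
        have h1 : M + 1 ∈ hA.toFinset := hA.mem_toFinset.2 hsucc
        have := hA.toFinset.le_max' _ h1
        omega
      have h1 : M ≤ per A := by
        rw [hper]
        exact Finset.single_le_sum (fun i _ => Nat.zero_le i) (hb.mem_toFinset.2 hMb)
      have hsub : hA.toFinset ⊆ Finset.range (M + 1) := by
        intro x hx
        exact Finset.mem_range.2 (by have := hA.toFinset.le_max' _ hx; omega)
      have h2 : vol A ≤ ∑ i ∈ Finset.range (M + 1), i := by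
        rw [hvol]; exact Finset.sum_le_sum_of_subset hsub
      have h3 := aux_two_S M
      have h4 : M * (M + 1) ≤ per A * (per A + 1) :=
        Nat.mul_le_mul h1 (by omega)
      omega
  · have : vol A = 0 := by
      apply finsum_mem_eq_zero_of_infinite
      have hsupp : A ∩ Function.support (fun x : ℕ => x) = A \ {0} := by
        ext x; simp [Function.mem_support]
      rw [hsupp]
      exact (Set.Infinite.diff (fun h => hA (h.subset (by simp)))
        (Set.finite_singleton 0))
    rw [vol] at this ⊢
    simp [this]

/-- Upper bound construction. -/
lemma aux_P_upper (n : ℕ) (hn : 1 ≤ n) :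
    ∃ m e : ℕ, 1 ≤ m ∧ P n ≤ m + 2 * e + 1 ∧ (m - 1) * m < 2 * n ∧ (e - 1) * e < 2 * m := by
  set S : ℕ → ℕ := fun k => ∑ i ∈ Finset.range (k + 1), i with hS
  have hSmono : ∀ a b : ℕ, a ≤ b → S a ≤ S b := fun a b h => aux_S_mono h
  have hSsucc : ∀ k : ℕ, 1 ≤ k → S k = S (k - 1) + k := by
    intro k hk
    have h := Finset.sum_range_succ (fun i => i) k
    have h2 : k - 1 + 1 = k := by omega
    simp only [hS, h2]
    simpa using h
  have hSself : ∀ k : ℕ, k ≤ S k := fun k =>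
    Finset.single_le_sum (fun i _ => Nat.zero_le i) (Finset.self_mem_range_succ k)
  have hex : ∃ m, n ≤ S m := ⟨n, hSself n⟩
  obtain ⟨m, hm, hmmin⟩ : ∃ m, n ≤ S m ∧ ∀ k, k < m → ¬ n ≤ S k :=
    ⟨Nat.find hex, Nat.find_spec hex, fun k hk => Nat.find_min hex hk⟩
  have hm1 : 1 ≤ m := by
    by_contra h
    have h0 : m = 0 := by omega
    rw [h0] at hm
    have : S 0 = 0 := by simp [hS]
    omega
  have hmlt' : ¬ n ≤ S (m - 1) := hmmin (m - 1) (by omega)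
  have hSm : S m = S (m - 1) + m := hSsucc m hm1
  obtain ⟨gg, hgg⟩ : ∃ gg, gg = S m - n := ⟨_, rfl⟩
  have hglt : gg < m := by omega
  have hex2 : ∃ e, gg ≤ S e := ⟨gg, hSself gg⟩
  obtain ⟨e, he, hemin⟩ : ∃ e, gg ≤ S e ∧ ∀ k, k < e → ¬ gg ≤ S k :=
    ⟨Nat.find hex2, Nat.find_spec hex2, fun k hk => Nat.find_min hex2 hk⟩
  have hem : e ≤ m := by
    by_contra h
    exact hemin m (by omega) (by have := hSself m; omega)
  obtain ⟨r, hr⟩ : ∃ r, r = S e - gg := ⟨_, rfl⟩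
  have hre : r = 0 ∨ (1 ≤ e ∧ r < e) := by
    rcases Nat.eq_zero_or_pos e with h | h
    · left
      have hz : S e = 0 := by simp [hS, h]
      omega
    · right
      have hemin' : ¬ gg ≤ S (e - 1) := hemin (e - 1) (by omega)
      have hSe : S e = S (e - 1) + e := hSsucc e h
      exact ⟨h, by omega⟩
  -- the set
  set F : Finset ℕ := insert 0 (insert r (Finset.Icc (e + 1) m)) with hF
  have hrIcc : r ∉ Finset.Icc (e + 1) m := by
    simp only [Finset.mem_Icc]; omega
  have hsumIcc := aux_sum_Icc e m hem
  have hSeSm : S e ≤ S m := hSmono e m hem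
  have h00 : ∑ x ∈ F, x = r + ∑ x ∈ Finset.Icc (e + 1) m, x := by
    rw [hF, Finset.sum_insert_of_eq_zero_if_notMem (f := fun x : ℕ => x) (fun _ => rfl),
      Finset.sum_insert hrIcc]
  have hvolF : vol ↑F = n := by
    rw [aux_vol_coe, h00, hsumIcc]
    have e1 : S e = ∑ i ∈ Finset.range (e + 1), i := rfl
    have e2 : S m = ∑ i ∈ Finset.range (m + 1), i := rfl
    omega
  -- boundary subset
  have hbsub : bdry ↑F ⊆ (↑(insert 0 (insert r (insert (e + 1) ({m} : Finset ℕ)))) : Set ℕ) := by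
    intro z hz
    obtain ⟨hzA, hznb⟩ := hz
    simp only [hF, Finset.coe_insert, Set.mem_insert_iff, Finset.coe_Icc, Set.mem_Icc,
      Finset.coe_singleton, Set.mem_singleton_iff] at hzA ⊢
    by_contra hc
    push_neg at hc
    apply hznb
    refine ⟨by omega, ?_, ?_⟩ <;>
      · simp only [hF, Finset.coe_insert, Set.mem_insert_iff, Finset.coe_Icc, Set.mem_Icc]
        omega
  have hbfin : (bdry ↑F).Finite := F.finite_toSet.subset (fun z hz => hz.1)
  have hperF : per ↑F ≤ m + 2 * e + 1 := by
    have hper : per ↑F = ∑ x ∈ hbfin.toFinset, x :=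
      finsum_mem_eq_finite_toFinset_sum (fun x => x) hbfin
    have hsub2 : hbfin.toFinset ⊆ insert 0 (insert r (insert (e + 1) ({m} : Finset ℕ))) := by
      intro x hx
      have := hbsub (hbfin.mem_toFinset.1 hx)
      exact_mod_cast this
    have h1 : per ↑F ≤ ∑ x ∈ insert 0 (insert r (insert (e + 1) ({m} : Finset ℕ))), x := by
      rw [hper]; exact Finset.sum_le_sum_of_subset hsub2
    have h2 := aux_sum_insert_le 0 (insert r (insert (e + 1) ({m} : Finset ℕ)))
    have h3 := aux_sum_insert_le r (insert (e + 1) ({m} : Finset ℕ))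
    have h4 := aux_sum_insert_le (e + 1) ({m} : Finset ℕ)
    have h5 : ∑ x ∈ ({m} : Finset ℕ), x = m := Finset.sum_singleton _ _
    omega
  refine ⟨m, e, hm1, ?_, ?_, ?_⟩
  · have hPle : P n ≤ per ↑F := Nat.sInf_le ⟨↑F, hvolF, rfl⟩
    omega
  · have h6 := aux_two_S (m - 1)
    have h7 : m - 1 + 1 = m := by omega
    rw [h7] at h6
    have e1 : S m = ∑ i ∈ Finset.range (m + 1), i := rfl
    have e2 : S (m - 1) = ∑ i ∈ Finset.range (m - 1 + 1), i := rfl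
    rw [h7] at e2
    omega
  · rcases Nat.eq_zero_or_pos e with h | h
    · rw [h]; simp; omega
    · have hemin' : ¬ gg ≤ S (e - 1) := hemin (e - 1) (by omega)
      have h6 := aux_two_S (e - 1)
      have h7 : e - 1 + 1 = e := by omega
      rw [h7] at h6
      have e2 : S (e - 1) = ∑ i ∈ Finset.range (e - 1 + 1), i := rfl
      rw [h7] at e2
      omega

lemma aux_P_lower (n : ℕ) : 2 * n ≤ P n * (P n + 1) := by
  have hne : {p | ∃ A : Set ℕ, vol A = n ∧ per A = p}.Nonempty := by
    refine ⟨per ↑({n} : Finset ℕ), ↑({n} : Finset ℕ), ?_, rfl⟩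
    rw [aux_vol_coe]; simp
  obtain ⟨A, hA, hAp⟩ := Nat.sInf_mem hne
  calc 2 * n = 2 * vol A := by rw [hA]
    _ ≤ per A * (per A + 1) := aux_vol_le_per A
    _ = P n * (P n + 1) := by rw [P, hAp]

lemma aux_sqrt_atTop : Filter.Tendsto Real.sqrt Filter.atTop Filter.atTop := by
  rw [Filter.tendsto_atTop_atTop]
  intro b
  refine ⟨b ^ 2 + 1, fun a ha => ?_⟩
  nlinarith [Real.sq_sqrt (by nlinarith [sq_nonneg b] : (0:ℝ) ≤ a), Real.sqrt_nonneg a,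
    sq_nonneg (Real.sqrt a - b)]

lemma aux_sqrt_add_le (a b : ℝ) (ha : 0 ≤ a) (hb : 0 ≤ b) :
    Real.sqrt (a + b) ≤ Real.sqrt a + Real.sqrt b := by
  nlinarith [Real.sq_sqrt ha, Real.sq_sqrt hb, Real.sq_sqrt (by linarith : (0:ℝ) ≤ a + b),
    Real.sqrt_nonneg a, Real.sqrt_nonneg b, Real.sqrt_nonneg (a + b),
    Real.sqrt_mul_self (by positivity : (0:ℝ) ≤ Real.sqrt a * Real.sqrt b)]

theorem stmt_17 :
    Filter.Tendsto (fun n : ℕ => (P n : ℝ) / (Real.sqrt 2 * Real.sqrt n))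
      Filter.atTop (nhds 1) := by
  -- abbreviations
  set s : ℕ → ℝ := fun n => Real.sqrt (2 * n) with hs
  have hs_atTop : Filter.Tendsto s Filter.atTop Filter.atTop := by
    apply aux_sqrt_atTop.comp
    exact (tendsto_natCast_atTop_atTop (R := ℝ)).const_mul_atTop (by norm_num)
  have hss_atTop : Filter.Tendsto (fun n => Real.sqrt (s n)) Filter.atTop Filter.atTop :=
    aux_sqrt_atTop.comp hs_atTop
  -- limits of the bounding functions
  have hlo : Filter.Tendsto (fun n : ℕ => 1 - (s n)⁻¹) Filter.atTop (nhds 1) := by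
    have := (tendsto_inv_atTop_zero (𝕜 := ℝ)).comp hs_atTop
    simpa using (tendsto_const_nhds (x := (1:ℝ)) (f := Filter.atTop (α := ℕ))).sub this
  have hhi : Filter.Tendsto (fun n : ℕ => 1 + 3 * (Real.sqrt (s n))⁻¹ + 7 * (s n)⁻¹)
      Filter.atTop (nhds 1) := by
    have h1 := (tendsto_inv_atTop_zero (𝕜 := ℝ)).comp hss_atTop
    have h2 := (tendsto_inv_atTop_zero (𝕜 := ℝ)).comp hs_atTop
    have := ((tendsto_const_nhds (x := (1:ℝ)) (f := Filter.atTop (α := ℕ))).add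
      (h1.const_mul 3)).add (h2.const_mul 7)
    simpa using this
  refine tendsto_of_tendsto_of_tendsto_of_le_of_le' hlo hhi ?_ ?_
  · -- lower bound, eventually
    filter_upwards [Filter.eventually_ge_atTop 1] with n hn
    have hspos : 0 < s n := Real.sqrt_pos.2 (by positivity)
    have hP := aux_P_lower n
    -- s n ≤ P n + 1
    have h1 : s n ≤ (P n : ℝ) + 1 := by
      have h2 : (2 * n : ℝ) ≤ ((P n : ℝ) + 1) ^ 2 := by
        have : (2 * n : ℕ) ≤ (P n + 1) * (P n + 1) := by nlinarith [aux_P_lower n]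
        have := (Nat.cast_le (α := ℝ)).2 this
        push_cast at this
        nlinarith
      calc s n ≤ Real.sqrt (((P n : ℝ) + 1) ^ 2) := Real.sqrt_le_sqrt h2
        _ = (P n : ℝ) + 1 := Real.sqrt_sq (by positivity)
    rw [show Real.sqrt 2 * Real.sqrt (n : ℝ) = s n from (Real.sqrt_mul (by norm_num) _).symm]
    rw [le_div_iff₀ hspos]
    have : s n * (s n)⁻¹ = 1 := mul_inv_cancel₀ (ne_of_gt hspos)
    nlinarith
  · -- upper bound, eventually
    filter_upwards [Filter.eventually_ge_atTop 1] with n hn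
    obtain ⟨m, e, hm1, hPle, hmlt, helt⟩ := aux_P_upper n hn
    have hspos : 0 < s n := Real.sqrt_pos.2 (by positivity)
    have hsqspos : 0 < Real.sqrt (s n) := Real.sqrt_pos.2 hspos
    -- (m : ℝ) ≤ s n + 1
    have hmR : (m : ℝ) ≤ s n + 1 := by
      have h1 : ((m - 1 : ℕ) : ℝ) ^ 2 ≤ (2 * n : ℝ) := by
        have : (m - 1) * (m - 1) ≤ 2 * n := by
          have : (m - 1) * (m - 1) ≤ (m - 1) * m := Nat.mul_le_mul_left _ (by omega)
          omega
        have := (Nat.cast_le (α := ℝ)).2 this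
        push_cast at this
        nlinarith
      have h2 : ((m - 1 : ℕ) : ℝ) ≤ s n := by
        calc ((m - 1 : ℕ) : ℝ) = Real.sqrt (((m - 1 : ℕ) : ℝ) ^ 2) :=
              (Real.sqrt_sq (by positivity)).symm
          _ ≤ s n := Real.sqrt_le_sqrt h1
      have h3 : (m : ℝ) ≤ ((m - 1 : ℕ) : ℝ) + 1 := by
        have : m ≤ (m - 1) + 1 := by omega
        exact_mod_cast this
      linarith
    -- (e : ℝ) ≤ √(2m) + 1
    have heR : (e : ℝ) ≤ Real.sqrt (2 * m) + 1 := by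
      rcases Nat.eq_zero_or_pos e with h | h
      · rw [h]; simp only [Nat.cast_zero]; positivity
      · have h1 : ((e - 1 : ℕ) : ℝ) ^ 2 ≤ (2 * m : ℝ) := by
          have : (e - 1) * (e - 1) ≤ 2 * m := by
            have : (e - 1) * (e - 1) ≤ (e - 1) * e := Nat.mul_le_mul_left _ (by omega)
            omega
          have := (Nat.cast_le (α := ℝ)).2 this
          push_cast at this
          nlinarith
        have h2 : ((e - 1 : ℕ) : ℝ) ≤ Real.sqrt (2 * m) := by
          calc ((e - 1 : ℕ) : ℝ) = Real.sqrt (((e - 1 : ℕ) : ℝ) ^ 2) :=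
                (Real.sqrt_sq (by positivity)).symm
            _ ≤ Real.sqrt (2 * m) := Real.sqrt_le_sqrt h1
        have h3 : (e : ℝ) ≤ ((e - 1 : ℕ) : ℝ) + 1 := by
          have : e ≤ (e - 1) + 1 := by omega
          exact_mod_cast this
        linarith
    -- √(2m) ≤ √2 * √(s n) + √2
    have hchain : Real.sqrt (2 * m) ≤ Real.sqrt 2 * Real.sqrt (s n) + Real.sqrt 2 := by
      have h1 : Real.sqrt (2 * m) ≤ Real.sqrt (2 * s n + 2) :=
        Real.sqrt_le_sqrt (by nlinarith)
      have h2 : Real.sqrt (2 * s n + 2) ≤ Real.sqrt (2 * s n) + Real.sqrt 2 :=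
        aux_sqrt_add_le _ 2 (by positivity) (by norm_num)
      have h3 : Real.sqrt (2 * s n) = Real.sqrt 2 * Real.sqrt (s n) :=
        Real.sqrt_mul (by norm_num) _
      linarith
    have hsqrt2 : Real.sqrt 2 ≤ 1.5 := by
      nlinarith [Real.sq_sqrt (by norm_num : (0:ℝ) ≤ 2), Real.sqrt_nonneg 2]
    have hsqrt2' : 0 ≤ Real.sqrt 2 := Real.sqrt_nonneg 2
    -- P n ≤ s n + 3 √(s n) + 7
    have hPR : (P n : ℝ) ≤ s n + 3 * Real.sqrt (s n) + 7 := by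
      have h0 : (P n : ℝ) ≤ (m : ℝ) + 2 * e + 1 := by
        have := (Nat.cast_le (α := ℝ)).2 hPle
        push_cast at this
        linarith
      nlinarith [hsqspos.le]
    rw [show Real.sqrt 2 * Real.sqrt (n : ℝ) = s n from (Real.sqrt_mul (by norm_num) _).symm]
    rw [div_le_iff₀ hspos]
    have hinv : s n * (s n)⁻¹ = 1 := mul_inv_cancel₀ (ne_of_gt hspos)
    have hinv2 : Real.sqrt (s n) * (Real.sqrt (s n))⁻¹ = 1 := mul_inv_cancel₀ (ne_of_gt hsqspos)
    have hss : Real.sqrt (s n) * Real.sqrt (s n) = s n := Real.mul_self_sqrt hspos.le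
    nlinarith [hsqspos.le, hspos.le]
end

section
/- Let n and m be positive integers with m ≥ f(n), where f(n) = ⌈(−1+√(1+8n))/2⌉. Then for every set A ⊆ {0,1,…,m−1} with vol(A) = m(m+1)/2 − n and m−1 ∈ A, one has per(A^c) ≥ 2f(n) − 2. -/
open scoped BigOperators

/-- Minimality of `f`: since `f n` is the ceiling of the real root of `x (x+1) = 2 n`,
we have `(f n - 1) * f n < 2 n`. -/
lemma f_key (n : ℕ) (hn : 1 ≤ n) : f n * f n < 2 * n + f n := by
  set r : ℝ := (-1 + Real.sqrt (1 + 8 * n)) / 2 with hr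
  have hs : Real.sqrt (1 + 8 * n) ^ 2 = 1 + 8 * n := by
    rw [Real.sq_sqrt]; positivity
  have hs3 : (3 : ℝ) ≤ Real.sqrt (1 + 8 * n) := by
    rw [show (3:ℝ) = Real.sqrt 9 by
      rw [show (9:ℝ) = 3^2 by norm_num, Real.sqrt_sq]; norm_num]
    apply Real.sqrt_le_sqrt
    have : (1:ℝ) ≤ (n:ℝ) := by exact_mod_cast hn
    nlinarith
  have hr1 : (1 : ℝ) ≤ r := by rw [hr]; linarith
  have hceil : (1 : ℤ) ≤ ⌈r⌉ := by exact_mod_cast Int.one_le_ceil_iff.2 (by linarith)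
  have hfc : (f n : ℝ) = (⌈r⌉ : ℝ) := by
    have h2 : ((f n : ℤ)) = ⌈r⌉ := by
      simp only [f]; rw [show (-1 + Real.sqrt (1 + 8 * n)) / 2 = r from hr.symm]
      exact Int.toNat_of_nonneg (by omega)
    exact_mod_cast h2
  have hflt : (f n : ℝ) < r + 1 := by rw [hfc]; exact Int.ceil_lt_add_one r
  have hf1 : (1 : ℝ) ≤ (f n : ℝ) := by
    rw [hfc]; exact_mod_cast hceil
  have hrr : r * (r + 1) = 2 * n := by
    rw [hr]; nlinarith [hs]
  have key : ((f n : ℝ) - 1) * (f n : ℝ) < 2 * n := by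
    calc ((f n : ℝ) - 1) * (f n : ℝ) < r * (r + 1) := by
          apply mul_lt_mul'' (by linarith) (by linarith) (by linarith) (by linarith)
      _ = 2 * n := hrr
  have : (f n : ℝ) * (f n : ℝ) < 2 * n + f n := by nlinarith
  exact_mod_cast this

/-- The purely arithmetic core of the estimate. -/
lemma arith_key (fn m n p : ℕ) (hfm : fn ≤ m) (hff : fn * fn < 2 * n + fn)
    (h : (n ≤ m ∧ m ≤ p) ∨ ∃ b : ℕ, 1 ≤ b ∧ 2 * n ≤ 2 * m + b * (b + 1) ∧ m + b ≤ p) :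
    2 * fn - 2 ≤ p := by
  have key : 2 * fn ≤ p + 2 := by
    by_contra hc
    push_neg at hc
    rcases h with ⟨h1, h2⟩ | ⟨b, hb1, hb2, hb3⟩
    · have h3 : 3 ≤ fn := by omega
      zify at *
      nlinarith [mul_nonneg (by linarith : (0:ℤ) ≤ (fn:ℤ) - 2) (by linarith : (0:ℤ) ≤ (fn:ℤ) - 3)]
    · have hble : b + 3 ≤ fn := by omega
      zify at *
      nlinarith [mul_nonneg (by linarith : (0:ℤ) ≤ (fn:ℤ) - 3 - b) (by linarith : (0:ℤ) ≤ (fn:ℤ) - 4 + b)]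
  omega

theorem stmt_18 (n m : ℕ) (hn : 1 ≤ n) (hm : 1 ≤ m) (hmf : f n ≤ m)
    (A : Set ℕ) (hsub : A ⊆ {k | k < m}) (hvol : vol A + n = m * (m + 1) / 2)
    (hmem : m - 1 ∈ A) :
    2 * f n - 2 ≤ per Aᶜ := by
  classical
  have hff : f n * f n < 2 * n + f n := f_key n hn
  have hIio : ({k | k < m} : Set ℕ) = Set.Iio m := rfl
  have hAfin : A.Finite := (Set.finite_Iio m).subset (hIio ▸ hsub)
  set B : Set ℕ := {k | k < m} \ A with hBdef
  have hBfin : B.Finite := (Set.finite_Iio m).subset (hIio ▸ Set.diff_subset)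
  -- volume identities
  have hAfs : vol A = ∑ i ∈ hAfin.toFinset, i := finsum_mem_eq_finite_toFinset_sum _ hAfin
  have hBfs : vol B = ∑ i ∈ hBfin.toFinset, i := finsum_mem_eq_finite_toFinset_sum _ hBfin
  have hdisj : Disjoint hAfin.toFinset hBfin.toFinset := by
    rw [Finset.disjoint_left]
    intro a ha hb
    rw [Set.Finite.mem_toFinset] at ha hb
    exact hb.2 ha
  have hunion : hAfin.toFinset ∪ hBfin.toFinset = Finset.range m := by
    ext x
    simp only [Finset.mem_union, Set.Finite.mem_toFinset, hBdef, Set.mem_diff,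
      Set.mem_setOf_eq, Finset.mem_range]
    constructor
    · rintro (h | h)
      · exact hsub h
      · exact h.1
    · intro hx
      by_cases hxA : x ∈ A
      · exact Or.inl hxA
      · exact Or.inr ⟨hx, hxA⟩
  have hsumAB : vol A + vol B = ∑ i ∈ Finset.range m, i := by
    rw [hAfs, hBfs, ← Finset.sum_union hdisj, hunion]
  have hgauss : (∑ i ∈ Finset.range m, i) * 2 = m * (m - 1) := Finset.sum_range_id_mul_two m
  have heven : 2 * (vol A + n) = m * (m + 1) := by
    rw [hvol]
    exact Nat.mul_div_cancel' (even_iff_two_dvd.mp (Nat.even_mul_succ_self m))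
  have hm1 : m * (m + 1) = m * (m - 1) + 2 * m := by
    cases m with
    | zero => omega
    | succ k => simp [Nat.succ_sub_one]; ring
  have hvolB : vol B + m = n := by omega
  -- boundary of Aᶜ is finite
  have hbd_sub : bdry Aᶜ ⊆ Set.Iic m := by
    intro z hz
    simp only [Set.mem_Iic]
    by_contra h
    push_neg at h
    apply hz.2
    refine ⟨by omega, ?_, ?_⟩
    · intro hzA
      have := hsub hzA
      simp only [Set.mem_setOf_eq] at this
      omega
    · intro hzA
      have := hsub hzA
      simp only [Set.mem_setOf_eq] at this
      omega
  have hbdfin : (bdry Aᶜ).Finite := (Set.finite_Iic m).subset hbd_sub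
  have hper : per Aᶜ = ∑ i ∈ hbdfin.toFinset, i := finsum_mem_eq_finite_toFinset_sum _ hbdfin
  -- m is in the boundary
  have hmA : m ∉ A := fun h => by
    have := hsub h; simp only [Set.mem_setOf_eq] at this; omega
  have hmbd : m ∈ bdry Aᶜ := by
    refine ⟨hmA, ?_⟩
    rintro ⟨-, hm1c, -⟩
    exact hm1c hmem
  have hmT : m ∈ hbdfin.toFinset := hbdfin.mem_toFinset.mpr hmbd
  -- case split
  by_cases hnm : n ≤ m
  · -- per ≥ m
    have hple : m ≤ per Aᶜ := by
      rw [hper]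
      exact Finset.single_le_sum (fun i _ => Nat.zero_le i) hmT
    exact arith_key (f n) m n (per Aᶜ) hmf hff (Or.inl ⟨hnm, hple⟩)
  · -- B nonempty, take its max
    push_neg at hnm
    have hBne : hBfin.toFinset.Nonempty := by
      rw [Finset.nonempty_iff_ne_empty]
      intro h
      rw [hBfs, h] at hvolB
      simp at hvolB
      omega
    set b : ℕ := hBfin.toFinset.max' hBne with hbdefn
    have hbB : b ∈ B := hBfin.mem_toFinset.mp (hBfin.toFinset.max'_mem hBne)
    have hble : ∀ x ∈ B, x ≤ b := fun x hx =>
      hBfin.toFinset.le_max' x (hBfin.mem_toFinset.mpr hx)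
    have hbm : b < m := hbB.1
    -- vol B ≤ b(b+1)/2
    have hBsub : hBfin.toFinset ⊆ Finset.range (b + 1) := by
      intro x hx
      rw [Finset.mem_range]
      exact Nat.lt_succ_of_le (hble x (hBfin.mem_toFinset.mp hx))
    have hvB2 : 2 * vol B ≤ b * (b + 1) := by
      have h1 : vol B ≤ ∑ i ∈ Finset.range (b + 1), i := by
        rw [hBfs]
        exact Finset.sum_le_sum_of_subset hBsub
      have h2 : (∑ i ∈ Finset.range (b + 1), i) * 2 = (b + 1) * b :=
        Finset.sum_range_id_mul_two (b + 1)
      have h3 : (b + 1) * b = b * (b + 1) := Nat.mul_comm _ _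
      omega
    -- b ≥ 1
    have hb1 : 1 ≤ b := by
      rcases Nat.eq_zero_or_pos b with h | h
      · rw [h] at hvB2; omega
      · exact h
    -- b+1 ∈ A
    have hbne : b ≠ m - 1 := fun h => hbB.2 (h ▸ hmem)
    have hb1A : b + 1 ∈ A := by
      by_contra h
      have : b + 1 ∈ B := ⟨by simp only [Set.mem_setOf_eq]; omega, h⟩
      have := hble _ this
      omega
    have hbbd : b ∈ bdry Aᶜ := by
      refine ⟨hbB.2, ?_⟩
      rintro ⟨-, -, hb1c⟩
      exact hb1c hb1A
    have hbT : b ∈ hbdfin.toFinset := hbdfin.mem_toFinset.mpr hbbd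
    have hbnem : b ≠ m := by omega
    have hple : m + b ≤ per Aᶜ := by
      rw [hper]
      calc m + b = ∑ i ∈ {m, b}, i := by
            rw [Finset.sum_pair (by omega : m ≠ b)]
        _ ≤ ∑ i ∈ hbdfin.toFinset, i := by
            apply Finset.sum_le_sum_of_subset
            intro x hx
            simp only [Finset.mem_insert, Finset.mem_singleton] at hx
            rcases hx with rfl | rfl
            · exact hmT
            · exact hbT
    exact arith_key (f n) m n (per Aᶜ) hmf hff (Or.inr ⟨b, hb1, by omega, hple⟩)
end

section
/- For all n ≥ 2, Q(n) ≥ 1 + f(n) + min{P(g(n)), √(2(g(n) + f(n) + 1)) + 1/2}, where f(n) = ⌈(−1+√(1+8n))/2⌉ and g(n) = f(n)(f(n)+1)/2 − n. -/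
open scoped BigOperators

/- ---------- auxiliary lemmas ---------- -/

lemma vol_eq_sum {S : Set ℕ} (h : S.Finite) : vol S = ∑ z ∈ h.toFinset, z :=
  finsum_mem_eq_finite_toFinset_sum _ h

lemma bdry_subset (S : Set ℕ) : bdry S ⊆ S := fun _ hz => hz.1

lemma per_eq_sum {S : Set ℕ} (h : (bdry S).Finite) : per S = ∑ z ∈ h.toFinset, z :=
  finsum_mem_eq_finite_toFinset_sum _ h

lemma finite_of_vol_ne_zero {A : Set ℕ} (hA : vol A ≠ 0) : A.Finite := by
  by_contra hinf
  apply hA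
  apply finsum_mem_eq_zero_of_infinite
  have h0 : A ∩ Function.support (fun i : ℕ => i) = A \ {0} := by
    ext x; simp [Function.mem_support]
  rw [h0]
  intro hfin
  exact hinf (hfin.of_diff (Set.finite_singleton 0))

lemma vol_nonempty {A : Set ℕ} (hA : vol A ≠ 0) : A.Nonempty := by
  rcases Set.eq_empty_or_nonempty A with h | h
  · exact absurd (by simp [vol, h]) hA
  · exact h

lemma bdry_compl_eq {A : Set ℕ} {m : ℕ} (hm : m ∈ A) (hmax : ∀ x ∈ A, x ≤ m) :
    bdry Aᶜ = insert (m + 1) (bdry {z | z ∉ A ∧ z ≤ m}) := by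
  ext z
  simp only [bdry, Set.mem_setOf_eq, Set.mem_compl_iff, Set.mem_insert_iff]
  constructor
  · rintro ⟨hzA, hz⟩
    rcases lt_trichotomy z (m + 1) with h | h | h
    · right
      have hzm : z ≤ m := by omega
      have hzne : z ≠ m := fun e => hzA (e ▸ hm)
      refine ⟨⟨hzA, hzm⟩, ?_⟩
      rintro ⟨h1, ⟨h2, -⟩, ⟨h3, -⟩⟩
      exact hz ⟨h1, h2, h3⟩
    · left; exact h
    · exfalso
      apply hz
      refine ⟨by omega, fun hc => ?_, fun hc => ?_⟩
      · have := hmax _ hc; omega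
      · have := hmax _ hc; omega
  · rintro (rfl | ⟨⟨hzA, hzm⟩, hz⟩)
    · refine ⟨fun hc => ?_, fun h => ?_⟩
      · have := hmax _ hc; omega
      · obtain ⟨h1, h2, h3⟩ := h
        have : m + 1 - 1 = m := by omega
        rw [this] at h2
        exact h2 hm
    · have hzne : z ≠ m := fun e => hzA (e ▸ hm)
      refine ⟨hzA, ?_⟩
      rintro ⟨h1, h2, h3⟩
      exact hz ⟨h1, ⟨h2, by omega⟩, ⟨h3, by omega⟩⟩

lemma per_compl_eq {A : Set ℕ} {m : ℕ} (hm : m ∈ A) (hmax : ∀ x ∈ A, x ≤ m) :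
    per Aᶜ = (m + 1) + per {z | z ∉ A ∧ z ≤ m} := by
  have hGfin : ({z | z ∉ A ∧ z ≤ m} : Set ℕ).Finite :=
    (Set.finite_Iic m).subset fun z hz => hz.2
  have hbfin : (bdry {z | z ∉ A ∧ z ≤ m}).Finite := hGfin.subset (bdry_subset _)
  have hnot : (m + 1) ∉ bdry {z | z ∉ A ∧ z ≤ m} := fun h => by
    have := (bdry_subset _ h).2; omega
  rw [per, bdry_compl_eq hm hmax, finsum_mem_insert _ hnot hbfin]; rfl

lemma sum_range_tri (k : ℕ) : ∑ i ∈ Finset.range (k + 1), i = k * (k + 1) / 2 := by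
  rw [Finset.sum_range_id]
  simp [Nat.mul_comm]

lemma vol_partition {A : Set ℕ} (hA : A.Finite) {m : ℕ} (hmax : ∀ x ∈ A, x ≤ m) :
    vol A + vol {z | z ∉ A ∧ z ≤ m} = m * (m + 1) / 2 := by
  classical
  have hGfin : ({z | z ∉ A ∧ z ≤ m} : Set ℕ).Finite :=
    (Set.finite_Iic m).subset fun z hz => hz.2
  have hdisj : Disjoint hA.toFinset hGfin.toFinset := by
    rw [Finset.disjoint_left]
    intro a ha hb
    rw [Set.Finite.mem_toFinset] at ha hb
    exact hb.1 ha
  have hunion : hA.toFinset ∪ hGfin.toFinset = Finset.range (m + 1) := by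
    ext x
    simp only [Finset.mem_union, Set.Finite.mem_toFinset, Set.mem_setOf_eq,
      Finset.mem_range, Nat.lt_succ_iff]
    constructor
    · rintro (h | h)
      · exact hmax x h
      · exact h.2
    · intro hx
      by_cases hA' : x ∈ A
      · exact Or.inl hA'
      · exact Or.inr ⟨hA', hx⟩
  rw [vol_eq_sum hA, vol_eq_sum hGfin, ← Finset.sum_union hdisj, hunion, sum_range_tri]

lemma f_le {n m : ℕ} (h : n ≤ m * (m + 1) / 2) : f n ≤ m := by
  have h2 : 2 * n ≤ m * (m + 1) := by
    calc 2 * n ≤ 2 * (m * (m + 1) / 2) := Nat.mul_le_mul_left 2 h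
      _ ≤ m * (m + 1) := by rw [Nat.mul_comm]; exact Nat.div_mul_le_self _ _
  rw [f, Int.toNat_le, Int.ceil_le]
  push_cast
  rw [div_le_iff₀ (by norm_num : (0:ℝ) < 2)]
  have hsq : (1 + 8 * (n:ℝ)) ≤ (2 * m + 1) ^ 2 := by
    have h2' : (2 * (n:ℝ)) ≤ (m:ℝ) * (m + 1) := by exact_mod_cast h2
    nlinarith
  have hs : Real.sqrt (1 + 8 * n) ≤ 2 * m + 1 := by
    calc Real.sqrt (1 + 8 * n) ≤ Real.sqrt ((2 * m + 1) ^ 2) := Real.sqrt_le_sqrt hsq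
      _ = 2 * m + 1 := Real.sqrt_sq (by positivity)
  linarith

lemma le_T_f (n : ℕ) : n ≤ f n * (f n + 1) / 2 := by
  have hx : (-1 + Real.sqrt (1 + 8 * n)) / 2 ≤ (f n : ℝ) := by
    rw [f]
    have h1 := Int.le_ceil ((-1 + Real.sqrt (1 + 8 * (n:ℝ))) / 2)
    have h2 : (⌈(-1 + Real.sqrt (1 + 8 * (n:ℝ))) / 2⌉ : ℝ) ≤ ((⌈(-1 + Real.sqrt (1 + 8 * (n:ℝ))) / 2⌉.toNat : ℕ) : ℝ) := by
      exact_mod_cast Int.self_le_toNat _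
    push_cast at h2 ⊢
    linarith
  have h0 : (0:ℝ) ≤ 1 + 8 * n := by positivity
  have hs : Real.sqrt (1 + 8 * n) ≤ 2 * (f n : ℝ) + 1 := by linarith
  have hsq : (1 + 8 * (n:ℝ)) ≤ (2 * (f n : ℝ) + 1) ^ 2 := by
    nlinarith [Real.sq_sqrt h0, Real.sqrt_nonneg (1 + 8 * (n:ℝ))]
  have h2 : 2 * n ≤ f n * (f n + 1) := by
    have : (2 * (n:ℝ)) ≤ (f n : ℝ) * ((f n : ℝ) + 1) := by nlinarith
    exact_mod_cast this
  rw [Nat.le_div_iff_mul_le (by norm_num : 0 < 2)]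
  omega

lemma le_per {S : Set ℕ} (hS : S.Finite) {M : ℕ} (hM : M ∈ bdry S) : M ≤ per S := by
  have hb := hS.subset (bdry_subset S)
  rw [per_eq_sum hb]
  exact Finset.single_le_sum (f := fun i => i) (fun i _ => Nat.zero_le i) (hb.mem_toFinset.2 hM)

lemma vol_le {S : Set ℕ} (hS : S.Finite) {M : ℕ} (hmax : ∀ x ∈ S, x ≤ M) :
    vol S ≤ M * (M + 1) / 2 := by
  rw [vol_eq_sum hS, ← sum_range_tri]
  apply Finset.sum_le_sum_of_subset
  intro x hx
  rw [Set.Finite.mem_toFinset] at hx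
  exact Finset.mem_range.2 (Nat.lt_succ_of_le (hmax x hx))

theorem stmt_19 (n : ℕ) (hn : 2 ≤ n) :
    1 + (f n : ℝ) + min ((P (g n) : ℝ))
      (Real.sqrt (2 * ((g n : ℝ) + (f n : ℝ) + 1)) + 1 / 2) ≤ (Q n : ℝ) := by
  classical
  -- the infimum Q n is attained
  have hne : {p | ∃ A : Set ℕ, vol A = n ∧ per Aᶜ = p}.Nonempty :=
    ⟨per ({n} : Set ℕ)ᶜ, ⟨{n}, by rw [vol, finsum_mem_singleton], rfl⟩⟩
  obtain ⟨A, hvolA, hperA⟩ := Nat.sInf_mem hne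
  have hQ : Q n = per Aᶜ := hperA.symm
  rw [hQ]
  have hvne : vol A ≠ 0 := by omega
  have hAfin := finite_of_vol_ne_zero hvne
  have hAne : hAfin.toFinset.Nonempty := by
    obtain ⟨a, ha⟩ := vol_nonempty hvne
    exact ⟨a, hAfin.mem_toFinset.2 ha⟩
  set m := hAfin.toFinset.max' hAne with hm_def
  have hmA : m ∈ A := hAfin.mem_toFinset.1 (hAfin.toFinset.max'_mem hAne)
  have hmax : ∀ x ∈ A, x ≤ m := fun x hx =>
    Finset.le_max' _ x (hAfin.mem_toFinset.2 hx)
  set G : Set ℕ := {z | z ∉ A ∧ z ≤ m} with hG_def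
  have hGfin : G.Finite := (Set.finite_Iic m).subset fun z hz => hz.2
  have hpart : n + vol G = m * (m + 1) / 2 := by
    rw [← hvolA]; exact vol_partition hAfin hmax
  have hnle : n ≤ m * (m + 1) / 2 := by omega
  have hf_le_m : f n ≤ m := f_le hnle
  have hTf : n ≤ f n * (f n + 1) / 2 := le_T_f n
  have hg : g n + n = f n * (f n + 1) / 2 := by rw [g]; omega
  have hper : per Aᶜ = (m + 1) + per G := per_compl_eq hmA hmax
  rcases eq_or_lt_of_le hf_le_m with heq | hlt
  · -- m = f n : use P (g n)
    have hvolG : vol G = g n := by rw [← heq] at hpart; omega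
    have hPle : P (g n) ≤ per G := Nat.sInf_le ⟨G, hvolG, rfl⟩
    have hnat : 1 + f n + P (g n) ≤ per Aᶜ := by omega
    have hreal : (1 : ℝ) + f n + P (g n) ≤ (per Aᶜ : ℝ) := by exact_mod_cast hnat
    have := min_le_left ((P (g n) : ℝ))
      (Real.sqrt (2 * ((g n : ℝ) + (f n : ℝ) + 1)) + 1 / 2)
    linarith
  · -- f n < m : use the square-root bound
    have hstep : (f n + 1) * (f n + 2) / 2 = f n * (f n + 1) / 2 + (f n + 1) := by
      have h1 : (f n + 1) * (f n + 2) = f n * (f n + 1) + (f n + 1) * 2 := by ring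
      rw [h1, Nat.add_mul_div_right _ _ (by norm_num : 0 < 2)]
    have hTm_ge : f n * (f n + 1) / 2 + f n + 1 ≤ m * (m + 1) / 2 := by
      have h1 : (f n + 1) * (f n + 2) ≤ m * (m + 1) :=
        Nat.mul_le_mul (by omega) (by omega)
      have h2 := Nat.div_le_div_right (c := 2) h1
      omega
    have hvolG_ge : g n + f n + 1 ≤ vol G := by omega
    have hGvne : vol G ≠ 0 := by omega
    have hGne : hGfin.toFinset.Nonempty := by
      obtain ⟨a, ha⟩ := vol_nonempty hGvne
      exact ⟨a, hGfin.mem_toFinset.2 ha⟩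
    set M := hGfin.toFinset.max' hGne with hM_def
    have hMG : M ∈ G := hGfin.mem_toFinset.1 (hGfin.toFinset.max'_mem hGne)
    have hMmax : ∀ x ∈ G, x ≤ M := fun x hx =>
      Finset.le_max' _ x (hGfin.mem_toFinset.2 hx)
    have hMb : M ∈ bdry G := by
      refine ⟨hMG, ?_⟩
      rintro ⟨h1, h2, h3⟩
      have := hMmax _ h3; omega
    have hperG : M ≤ per G := le_per hGfin hMb
    have hvolG_le : vol G ≤ M * (M + 1) / 2 := vol_le hGfin hMmax
    have hkey : 2 * (g n + f n + 1) ≤ M * (M + 1) := by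
      calc 2 * (g n + f n + 1) ≤ 2 * vol G := Nat.mul_le_mul_left 2 hvolG_ge
        _ ≤ 2 * (M * (M + 1) / 2) := Nat.mul_le_mul_left 2 hvolG_le
        _ ≤ M * (M + 1) := by rw [Nat.mul_comm]; exact Nat.div_mul_le_self _ _
    have hsq : Real.sqrt (2 * ((g n : ℝ) + (f n : ℝ) + 1)) ≤ (M : ℝ) + 1 / 2 := by
      have h1 : (2 * ((g n : ℝ) + (f n : ℝ) + 1)) ≤ ((M : ℝ) + 1 / 2) ^ 2 := by
        have h2 : (2 * ((g n : ℝ) + (f n : ℝ) + 1)) ≤ (M : ℝ) * ((M : ℝ) + 1) := by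
          exact_mod_cast hkey
        nlinarith
      calc Real.sqrt (2 * ((g n : ℝ) + (f n : ℝ) + 1))
          ≤ Real.sqrt (((M : ℝ) + 1 / 2) ^ 2) := Real.sqrt_le_sqrt h1
        _ = (M : ℝ) + 1 / 2 := Real.sqrt_sq (by positivity)
    have hnat : f n + 2 + M ≤ per Aᶜ := by omega
    have hreal : (f n : ℝ) + 2 + (M : ℝ) ≤ (per Aᶜ : ℝ) := by exact_mod_cast hnat
    have hmin := min_le_right ((P (g n) : ℝ))
      (Real.sqrt (2 * ((g n : ℝ) + (f n : ℝ) + 1)) + 1 / 2)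
    linarith
end
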